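/- arXiv:2107.02523 — 4 statements merged into one kernel-verified Lean document; each statement's English description precedes it below -/
import Mathlib

section
/- The density function h satisfies: h(x) = 1 for every x ∈ Ω⁻, 0 ≤ h(x) ≤ 1 for every x ∈ Ω, and the set M = {x ∈ Ω⁺ : h(x) = 0} has two-dimensional Lebesgue measure zero. -/
open MeasureTheory Set Filter Topology

noncomputable section

/-- Dot product on `ℝ × ℝ`. -/
def dot (a b : ℝ × ℝ) : ℝ := a.1 * b.1 + a.2 * b.2

/-- Hypotheses on the profile function `η`: Lipschitz, 1-periodic in the second
variable, uniformly positive. -/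
structure EtaHyp (η : ℝ → ℝ → ℝ) : Prop where
  lip : ∃ K : NNReal, LipschitzWith K fun p : ℝ × ℝ => η p.1 p.2
  per : ∀ t y, η t (y + 1) = η t y
  pos : ∃ c : ℝ, 0 < c ∧ ∀ t y, c ≤ η t y

/-- `η₋(t) = min_{y ∈ [0,1]} η(t,y)`. -/
def etaMinus (η : ℝ → ℝ → ℝ) (t : ℝ) : ℝ := sInf (η t '' Icc 0 1)

/-- `η₊(t) = max_{y ∈ [0,1]} η(t,y)`. -/
def etaPlus (η : ℝ → ℝ → ℝ) (t : ℝ) : ℝ := sSup (η t '' Icc 0 1)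

/-- The fixed domain `Ω`. -/
def Omega (η : ℝ → ℝ → ℝ) : Set (ℝ × ℝ) :=
  {x | 0 < x.1 ∧ x.1 < 1 ∧ 0 < x.2 ∧ x.2 < etaPlus η x.1}

/-- The lower part `Ω⁻`. -/
def OmegaMinus (η : ℝ → ℝ → ℝ) : Set (ℝ × ℝ) :=
  {x | 0 < x.1 ∧ x.1 < 1 ∧ 0 < x.2 ∧ x.2 < etaMinus η x.1}

/-- The upper part `Ω⁺`. -/
def OmegaPlus (η : ℝ → ℝ → ℝ) : Set (ℝ × ℝ) :=
  {x | 0 < x.1 ∧ x.1 < 1 ∧ etaMinus η x.1 < x.2 ∧ x.2 < etaPlus η x.1}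

/-- The bottom boundary `Γ_b = [0,1] × {0}`. -/
def GammaB : Set (ℝ × ℝ) := Icc (0 : ℝ) 1 ×ˢ {(0 : ℝ)}

/-- The oscillating domain `Ω_ε`. -/
def OmegaEps (η : ℝ → ℝ → ℝ) (ε : ℝ) : Set (ℝ × ℝ) :=
  {x | 0 < x.1 ∧ x.1 < 1 ∧ 0 < x.2 ∧ x.2 < η x.1 (x.1 / ε)}

/-- The periodic (oscillating) region `Ω_ε⁺`. -/
def OmegaEpsPlus (η : ℝ → ℝ → ℝ) (ε : ℝ) : Set (ℝ × ℝ) :=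
  {x | 0 < x.1 ∧ x.1 < 1 ∧ etaMinus η x.1 < x.2 ∧ x.2 < η x.1 (x.1 / ε)}

/-- The cell `Y(x) = {y ∈ [0,1) : x₂ < η(x₁,y)}`. -/
def Ycell (η : ℝ → ℝ → ℝ) (x : ℝ × ℝ) : Set ℝ :=
  {y | y ∈ Ico (0 : ℝ) 1 ∧ x.2 < η x.1 y}

/-- The density `h(x) = |Y(x)|`. -/
def dens (η : ℝ → ℝ → ℝ) (x : ℝ × ℝ) : ℝ := (volume (Ycell η x)).toReal

/-- The measure `h dx`. -/
def hMeas (η : ℝ → ℝ → ℝ) : Measure (ℝ × ℝ) :=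
  volume.withDensity fun x => ENNReal.ofReal (dens η x)

/-- The unfolded domain `Ω_u⁺`. -/
def OmegaU (η : ℝ → ℝ → ℝ) : Set ((ℝ × ℝ) × ℝ) :=
  {p | p.1 ∈ OmegaPlus η ∧ p.2 ∈ Ycell η p.1}

/-- The unfolding operator `(T_ε v)(x,y) = v(ε⌊x₁/ε⌋ + εy, x₂)`. -/
def unfold {α : Type*} (ε : ℝ) (v : ℝ × ℝ → α) : (ℝ × ℝ) × ℝ → α :=
  fun p => v (ε * (⌊p.1.1 / ε⌋ : ℝ) + ε * p.2, p.1.2)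

/-- Extension by zero outside `S`. -/
def extz {α : Type*} [Zero α] (S : Set (ℝ × ℝ)) (v : ℝ × ℝ → α) : ℝ × ℝ → α :=
  S.indicator v

/-- Weak convergence in `L²(S)`: testing against every `g ∈ L²(S)`. -/
def WeakL2 {α : Type*} [MeasurableSpace α] (μ : Measure α) (S : Set α)
    (F : ℕ → α → ℝ) (f : α → ℝ) : Prop :=
  ∀ g : α → ℝ, MemLp g 2 (μ.restrict S) →
    Tendsto (fun n => ∫ x in S, F n x * g x ∂μ) atTop (𝓝 (∫ x in S, f x * g x ∂μ))

/-- Hypotheses (H1)–(H3) on the Carathéodory function `A`. -/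
structure AHyp (A : ℝ × ℝ → ℝ × ℝ → ℝ × ℝ) (k₀ : ℝ × ℝ → ℝ) (c₀ c₁ : ℝ) : Prop where
  measA : ∀ ξ : ℝ × ℝ, Measurable fun x => A x ξ
  contA : ∀ x : ℝ × ℝ, Continuous fun ξ => A x ξ
  c0pos : 0 < c₀
  c1pos : 0 < c₁
  mono : ∀ᵐ x : ℝ × ℝ, ∀ ξ ζ : ℝ × ℝ, ξ ≠ ζ → 0 < dot (A x ξ - A x ζ) (ξ - ζ)
  coer : ∀ x ξ, c₀ * ‖ξ‖ ^ 2 - k₀ x ≤ dot (A x ξ) ξ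
  grow : ∀ x ξ, ‖A x ξ‖ ≤ c₁ * ‖ξ‖ + k₀ x

/-- `Du` is the a.e. gradient of `u` on the set `S`. -/
def AEGradOn (S : Set (ℝ × ℝ)) (u : ℝ × ℝ → ℝ) (Du : ℝ × ℝ → ℝ × ℝ) : Prop :=
  ∀ᵐ x : ℝ × ℝ, x ∈ S → DifferentiableAt ℝ u x ∧
    fderiv ℝ u x (1, 0) = (Du x).1 ∧ fderiv ℝ u x (0, 1) = (Du x).2

/-- A solution of the ε-problem: locally Lipschitz, continuous up to `Γ_b`,
vanishing on `Γ_b`, with a.e. gradient `Du ∈ L²(Ω_ε)²`, satisfying the weak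
formulation against all Lipschitz test functions vanishing on `Γ_b` with
square-integrable gradient. -/
structure IsEpsSol (η : ℝ → ℝ → ℝ) (A : ℝ × ℝ → ℝ × ℝ → ℝ × ℝ) (f : ℝ × ℝ → ℝ)
    (ε : ℝ) (u : ℝ × ℝ → ℝ) (Du : ℝ × ℝ → ℝ × ℝ) : Prop where
  locLip : ∀ x ∈ OmegaEps η ε, ∃ K : NNReal, ∃ t ∈ 𝓝 x, LipschitzOnWith K u t
  contb : ContinuousOn u (OmegaEps η ε ∪ GammaB)
  zerob : ∀ x ∈ GammaB, u x = 0
  grad : AEGradOn (OmegaEps η ε) u Du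
  gradL2 : MemLp Du 2 (volume.restrict (OmegaEps η ε))
  weak : ∀ (φ : ℝ × ℝ → ℝ) (Dφ : ℝ × ℝ → ℝ × ℝ),
    (∃ K : NNReal, LipschitzOnWith K φ (OmegaEps η ε ∪ GammaB)) →
    (∀ x ∈ GammaB, φ x = 0) →
    AEGradOn (OmegaEps η ε) φ Dφ →
    MemLp Dφ 2 (volume.restrict (OmegaEps η ε)) →
    ∫ x in OmegaEps η ε, dot (A x (Du x)) (Dφ x) = ∫ x in OmegaEps η ε, f x * φ x

/-- Membership in the weighted space `W(Ω,Γ_b)`, together with the designated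
gradient `gradm` on `Ω⁻` and vertical derivative `d2` (`h`-a.e. on `Ω`): there are
smooth approximations vanishing on `Γ_b` converging in the appropriate norms. -/
def MemW (η : ℝ → ℝ → ℝ) (u : ℝ × ℝ → ℝ) (gradm : ℝ × ℝ → ℝ × ℝ) (d2 : ℝ × ℝ → ℝ) : Prop :=
  Measurable u ∧
  MemLp gradm 2 (volume.restrict (OmegaMinus η)) ∧
  Integrable (fun x => d2 x ^ 2 * dens η x) (volume.restrict (Omega η)) ∧
  ∃ φ : ℕ → ℝ × ℝ → ℝ,
    (∀ n, ∃ U : Set (ℝ × ℝ), IsOpen U ∧ closure (Omega η) ⊆ U ∧ ContDiffOn ℝ (⊤ : ℕ∞) (φ n) U) ∧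
    (∀ n, ∀ x ∈ GammaB, φ n x = 0) ∧
    Tendsto (fun n => ∫ x in Omega η, (φ n x - u x) ^ 2 * dens η x) atTop (𝓝 0) ∧
    Tendsto (fun n => ∫ x in OmegaMinus η,
      ‖((fderiv ℝ (φ n) x (1, 0), fderiv ℝ (φ n) x (0, 1)) - gradm x : ℝ × ℝ)‖ ^ 2)
      atTop (𝓝 0) ∧
    Tendsto (fun n => ∫ x in Omega η, (fderiv ℝ (φ n) x (0, 1) - d2 x) ^ 2 * dens η x)
      atTop (𝓝 0)

/-- The homogenized (limit) problem satisfied by `(u₀, q̄)` (through the data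
`u₀, gradm = ∇u₀|_{Ω⁻}, d2 = ∂₂u₀, qbar`). -/
def LimitProblem (η : ℝ → ℝ → ℝ) (A : ℝ × ℝ → ℝ × ℝ → ℝ × ℝ) (f : ℝ × ℝ → ℝ)
    (gradm : ℝ × ℝ → ℝ × ℝ) (d2 : ℝ × ℝ → ℝ) (qbar : ℝ × ℝ → ℝ) : Prop :=
  (∀ (φ : ℝ × ℝ → ℝ) (gφ : ℝ × ℝ → ℝ × ℝ) (d2φ : ℝ × ℝ → ℝ), MemW η φ gφ d2φ →
    ∫ x in OmegaMinus η, dot (A x (gradm x)) (gφ x)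
      + ∫ x in OmegaPlus η, dens η x * (A x (qbar x, d2 x)).2 * d2φ x
    = ∫ x in OmegaMinus η, f x * φ x + ∫ x in OmegaPlus η, f x * φ x * dens η x) ∧
  ∀ᵐ x ∂volume.restrict (OmegaPlus η), dens η x * (A x (qbar x, d2 x)).1 = 0


/-- `h = 1` on `Ω⁻`, `0 ≤ h ≤ 1` on `Ω`, and `{x ∈ Ω⁺ : h(x) = 0}`
has two-dimensional Lebesgue measure zero. -/
theorem density_properties (η : ℝ → ℝ → ℝ) (hη : EtaHyp η) :
    (∀ x ∈ OmegaMinus η, dens η x = 1) ∧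
    (∀ x ∈ Omega η, 0 ≤ dens η x ∧ dens η x ≤ 1) ∧
    volume {x ∈ OmegaPlus η | dens η x = 0} = 0 := by
  obtain ⟨K, hK⟩ := hη.lip
  have hcont : ∀ t, Continuous fun y => η t y := fun t =>
    hK.continuous.comp (continuous_const.prodMk continuous_id)
  have hYsub : ∀ x : ℝ × ℝ, Ycell η x ⊆ Ico (0 : ℝ) 1 := fun x y hy => hy.1
  have hvol1 : volume (Ico (0 : ℝ) 1) = 1 := by simp
  refine ⟨?_, ?_, ?_⟩
  · intro x hx
    have hY : Ycell η x = Ico (0 : ℝ) 1 := by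
      apply Subset.antisymm (hYsub x)
      intro y hy
      refine ⟨hy, lt_of_lt_of_le hx.2.2.2 ?_⟩
      exact csInf_le (isCompact_Icc.image (hcont x.1)).bddBelow
        ⟨y, ⟨hy.1, hy.2.le⟩, rfl⟩
    simp [dens, hY, hvol1]
  · intro x _
    refine ⟨ENNReal.toReal_nonneg, ?_⟩
    have := measure_mono (μ := volume) (hYsub x)
    rw [hvol1] at this
    calc dens η x ≤ (1 : ENNReal).toReal := ENNReal.toReal_mono ENNReal.one_ne_top this
    _ = 1 := by simp
  · have hempty : {x ∈ OmegaPlus η | dens η x = 0} = ∅ := by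
      ext x
      simp only [mem_setOf_eq, mem_empty_iff_false, iff_false, not_and]
      rintro hx hd
      -- sup is attained
      obtain ⟨y₀, hy₀, hsup⟩ := isCompact_Icc.exists_sSup_image_eq
        (nonempty_Icc.2 zero_le_one) (hcont x.1).continuousOn
      have hx2 : x.2 < η x.1 y₀ := by
        have := hx.2.2.2
        rwa [etaPlus, hsup] at this
      -- get y₁ ∈ [0,1) with x₂ < η x₁ y₁
      obtain ⟨y₁, hy₁, hxy₁⟩ : ∃ y₁, y₁ ∈ Ico (0:ℝ) 1 ∧ x.2 < η x.1 y₁ := by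
        rcases lt_or_eq_of_le hy₀.2 with h1 | h1
        · exact ⟨y₀, ⟨hy₀.1, h1⟩, hx2⟩
        · refine ⟨0, ⟨le_refl 0, zero_lt_one⟩, ?_⟩
          have : η x.1 (0 + 1) = η x.1 0 := hη.per x.1 0
          rw [zero_add, ← h1] at this
          rwa [← this]
      set U : Set ℝ := {y | x.2 < η x.1 y} with hU
      have hUopen : IsOpen U := isOpen_lt continuous_const (hcont x.1)
      -- the open set Ioo 0 1 ∩ U is nonempty
      have hVne : (Ioo (0:ℝ) 1 ∩ U).Nonempty := by
        rcases lt_or_eq_of_le hy₁.1 with h0 | h0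
        · exact ⟨y₁, ⟨h0, hy₁.2⟩, hxy₁⟩
        · obtain ⟨δ, hδ, hball⟩ := Metric.isOpen_iff.1 hUopen y₁ hxy₁
          refine ⟨min (δ/2) (1/2), ⟨lt_min (by linarith) (by norm_num),
            lt_of_le_of_lt (min_le_right _ _) (by norm_num)⟩, hball ?_⟩
          rw [Metric.mem_ball, Real.dist_eq, ← h0, sub_zero,
            abs_of_pos (lt_min (by linarith) (by norm_num))]
          exact lt_of_le_of_lt (min_le_left _ _) (by linarith)
      have hVsub : Ioo (0:ℝ) 1 ∩ U ⊆ Ycell η x := fun y hy =>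
        ⟨⟨hy.1.1.le, hy.1.2⟩, hy.2⟩
      have hpos : 0 < volume (Ycell η x) :=
        lt_of_lt_of_le ((isOpen_Ioo.inter hUopen).measure_pos volume hVne)
          (measure_mono hVsub)
      have hfin : volume (Ycell η x) ≠ ⊤ := by
        refine ne_top_of_le_ne_top ENNReal.one_ne_top ?_
        rw [← hvol1]; exact measure_mono (hYsub x)
      have : volume (Ycell η x) = 0 := by
        rwa [dens, ENNReal.toReal_eq_zero_iff, or_iff_left hfin] at hd
      exact absurd this hpos.ne'
    rw [hempty]; exact measure_empty

end
end

section
/- For every ε = 1/k one has T_ε(χ_{Ω_ε⁺}) = χ_{Ω_ε^u}, where Ω_ε^u = {(x,y) ∈ ℝ² × [0,1) : 0 < x₁ < 1, η₋(ε⌊x₁/ε⌋ + εy) < x₂ < η(ε⌊x₁/ε⌋ + εy, y)}; and for every 1 ≤ p < ∞ the characteristic functions χ_{Ω_ε^u} converge strongly in L^p(ℝ² × [0,1)) to χ_{Ω_u⁺} as ε → 0. -/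
open MeasureTheory Set Filter Topology

noncomputable section

/-- The unfolded oscillating region `Ω_ε^u`. -/
def OmegaEpsU (η : ℝ → ℝ → ℝ) (ε : ℝ) : Set ((ℝ × ℝ) × ℝ) :=
  {p | 0 < p.1.1 ∧ p.1.1 < 1 ∧ p.2 ∈ Ico (0 : ℝ) 1 ∧
    etaMinus η (ε * (⌊p.1.1 / ε⌋ : ℝ) + ε * p.2) < p.1.2 ∧
    p.1.2 < η (ε * (⌊p.1.1 / ε⌋ : ℝ) + ε * p.2) p.2}


namespace UnfoldAux

open MeasureTheory Set Filter Topology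

variable {η : ℝ → ℝ → ℝ}

lemma eta_continuous (hη : EtaHyp η) : Continuous fun q : ℝ × ℝ => η q.1 q.2 := by
  obtain ⟨K, hK⟩ := hη.lip
  exact hK.continuous

lemma eta_lip_fst {K : NNReal} (hK : LipschitzWith K fun q : ℝ × ℝ => η q.1 q.2)
    (t s y : ℝ) : |η t y - η s y| ≤ (K : ℝ) * |t - s| := by
  have h := hK.dist_le_mul (t, y) (s, y)
  simpa [Prod.dist_eq, Real.dist_eq, max_eq_left (abs_nonneg (t - s))] using h

lemma image_ne (t : ℝ) : (η t '' Icc 0 1).Nonempty :=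
  ⟨η t 0, mem_image_of_mem _ (by norm_num : (0:ℝ) ∈ Icc (0:ℝ) 1)⟩

lemma cont_slice (hη : EtaHyp η) (t : ℝ) : Continuous (η t) := by
  have h := eta_continuous hη
  exact h.comp (continuous_const.prodMk continuous_id)

lemma bddBelow_img (hη : EtaHyp η) (t : ℝ) : BddBelow (η t '' Icc 0 1) :=
  (isCompact_Icc.bddBelow_image (cont_slice hη t).continuousOn)

lemma bddAbove_img (hη : EtaHyp η) (t : ℝ) : BddAbove (η t '' Icc 0 1) :=
  (isCompact_Icc.bddAbove_image (cont_slice hη t).continuousOn)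

lemma etaMinus_le (hη : EtaHyp η) {t y : ℝ} (hy : y ∈ Icc (0:ℝ) 1) :
    etaMinus η t ≤ η t y :=
  csInf_le (bddBelow_img hη t) ⟨y, hy, rfl⟩

lemma le_etaPlus (hη : EtaHyp η) {t y : ℝ} (hy : y ∈ Icc (0:ℝ) 1) :
    η t y ≤ etaPlus η t :=
  le_csSup (bddAbove_img hη t) ⟨y, hy, rfl⟩

lemma etaMinus_lip (hη : EtaHyp η) {K : NNReal}
    (hK : LipschitzWith K fun q : ℝ × ℝ => η q.1 q.2) (t s : ℝ) :
    |etaMinus η t - etaMinus η s| ≤ (K : ℝ) * |t - s| := by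
  have key : ∀ a b : ℝ, etaMinus η a - etaMinus η b ≤ (K : ℝ) * |a - b| := by
    intro a b
    have h1 : etaMinus η a - (K : ℝ) * |a - b| ≤ etaMinus η b := by
      apply le_csInf (image_ne b)
      rintro w ⟨y, hy, rfl⟩
      have h2 := etaMinus_le hη (t := a) hy
      have h3 := abs_le.mp (eta_lip_fst hK a b y)
      linarith [h3.1, h3.2]
    linarith
  have h1 := key t s
  have h2 := key s t
  rw [abs_sub_comm s t] at h2
  exact abs_sub_le_iff.mpr ⟨h1, h2⟩

lemma etaPlus_lip (hη : EtaHyp η) {K : NNReal}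
    (hK : LipschitzWith K fun q : ℝ × ℝ => η q.1 q.2) (t s : ℝ) :
    |etaPlus η t - etaPlus η s| ≤ (K : ℝ) * |t - s| := by
  have key : ∀ a b : ℝ, etaPlus η a - etaPlus η b ≤ (K : ℝ) * |a - b| := by
    intro a b
    have h1 : etaPlus η a ≤ etaPlus η b + (K : ℝ) * |a - b| := by
      apply csSup_le (image_ne a)
      rintro w ⟨y, hy, rfl⟩
      have h2 := le_etaPlus hη (t := b) hy
      have h3 := abs_le.mp (eta_lip_fst hK a b y)
      linarith [h3.1, h3.2]
    linarith
  have h1 := key t s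
  have h2 := key s t
  rw [abs_sub_comm s t] at h2
  exact abs_sub_le_iff.mpr ⟨h1, h2⟩

lemma etaMinus_continuous (hη : EtaHyp η) : Continuous (etaMinus η) := by
  obtain ⟨K, hK⟩ := hη.lip
  exact (LipschitzWith.of_dist_le_mul (fun a b => by
    simpa [Real.dist_eq] using etaMinus_lip hη hK a b)).continuous

lemma etaPlus_continuous (hη : EtaHyp η) : Continuous (etaPlus η) := by
  obtain ⟨K, hK⟩ := hη.lip
  exact (LipschitzWith.of_dist_le_mul (fun a b => by
    simpa [Real.dist_eq] using etaPlus_lip hη hK a b)).continuous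

lemma per_int (hη : EtaHyp η) (t y : ℝ) (n : ℤ) : η t (y + n) = η t y := by
  induction n using Int.induction_on with
  | zero => simp
  | succ n ih =>
      push_cast at ih ⊢
      have h : y + ((n : ℝ) + 1) = (y + n) + 1 := by ring
      rw [h, hη.per, ih]
  | pred n ih =>
      push_cast at ih ⊢
      have h := hη.per t (y + (-(n : ℝ) - 1))
      have h2 : y + (-(n : ℝ) - 1) + 1 = y + -(n:ℝ) := by ring
      rw [h2] at h
      rw [← h]
      exact ih

lemma mem_iff (hη : EtaHyp η) {k : ℕ} (hk : 1 ≤ k) (p : (ℝ × ℝ) × ℝ)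
    (hx : p.1.1 ≠ 0) (hy0 : p.2 ≠ 0) (hy : p.2 ∈ Ico (0:ℝ) 1) :
    ((1/(k:ℝ)) * (⌊p.1.1 / (1/(k:ℝ))⌋ : ℝ) + (1/(k:ℝ)) * p.2, p.1.2) ∈
        OmegaEpsPlus η (1/(k:ℝ)) ↔ p ∈ OmegaEpsU η (1/(k:ℝ)) := by
  set ε : ℝ := 1/(k:ℝ) with hεdef
  have hkR : (0:ℝ) < k := by exact_mod_cast hk
  have hε : 0 < ε := by positivity
  have hek : ε * k = 1 := by rw [hεdef]; field_simp
  set m : ℤ := ⌊p.1.1 / ε⌋ with hmdef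
  have hfl : ε * m ≤ p.1.1 := by
    have h := Int.floor_le (p.1.1 / ε)
    rw [le_div_iff₀ hε] at h
    linarith
  have hfl2 : p.1.1 < ε * (m + 1) := by
    have h := Int.lt_floor_add_one (p.1.1 / ε)
    rw [div_lt_iff₀ hε] at h
    linarith
  have hzdiv : (ε * m + ε * p.2) / ε = (m : ℝ) + p.2 := by
    field_simp
  have hper : η (ε * m + ε * p.2) ((ε * m + ε * p.2) / ε) =
      η (ε * m + ε * p.2) p.2 := by
    rw [hzdiv, add_comm (m:ℝ) p.2]
    exact per_int hη _ _ m
  simp only [OmegaEpsPlus, OmegaEpsU, Set.mem_setOf_eq]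
  constructor
  · rintro ⟨g1, g2, g3, g4⟩
    have hmy : 0 < (m:ℝ) + p.2 := by
      by_contra hcon
      push_neg at hcon
      nlinarith
    have hm0 : (0:ℤ) ≤ m := by
      have h1 : (-1:ℝ) < (m:ℝ) := by linarith [hy.2]
      have h2 : (-1:ℤ) < m := by exact_mod_cast h1
      omega
    have hm0R : (0:ℝ) ≤ (m:ℝ) := by exact_mod_cast hm0
    have hx1pos : 0 < p.1.1 := by
      rcases lt_or_eq_of_le (by nlinarith : (0:ℝ) ≤ p.1.1) with h | h
      · exact h
      · exact absurd h.symm hx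
    have hmyk : (m:ℝ) + p.2 < (k:ℝ) := by
      have h1 : ε * ((m:ℝ) + p.2) < ε * (k:ℝ) := by rw [mul_add]; linarith
      exact lt_of_mul_lt_mul_left h1 hε.le
    have hmk : (m:ℝ) + 1 ≤ (k:ℝ) := by
      have h1 : (m:ℝ) < (k:ℝ) := by linarith [hy.1]
      have h2 : m < (k:ℤ) := by exact_mod_cast h1
      have h3 : m + 1 ≤ (k:ℤ) := by omega
      exact_mod_cast h3
    have hx1lt : p.1.1 < 1 := by
      have h1 := mul_le_mul_of_nonneg_left hmk hε.le
      nlinarith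
    rw [hper] at g4
    exact ⟨hx1pos, hx1lt, hy, g3, g4⟩
  · rintro ⟨h1, h2, _, h4, h5⟩
    have hm0 : (0:ℤ) ≤ m := Int.floor_nonneg.mpr (div_pos h1 hε).le
    have hm0R : (0:ℝ) ≤ (m:ℝ) := by exact_mod_cast hm0
    have hy0' : 0 < p.2 := lt_of_le_of_ne hy.1 (Ne.symm hy0)
    have hz0 : 0 < ε * m + ε * p.2 := by nlinarith
    have hmk : (m:ℝ) + 1 ≤ (k:ℝ) := by
      have ha : (m:ℝ) ≤ p.1.1 / ε := Int.floor_le _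
      have hb : p.1.1 / ε < (k:ℝ) := by
        rw [div_lt_iff₀ hε]
        nlinarith
      have h1 : (m:ℝ) < (k:ℝ) := lt_of_le_of_lt ha hb
      have h2 : m < (k:ℤ) := by exact_mod_cast h1
      have h3 : m + 1 ≤ (k:ℤ) := by omega
      exact_mod_cast h3
    have hz1 : ε * m + ε * p.2 < 1 := by
      have h3 : ε * p.2 < ε * 1 := mul_lt_mul_of_pos_left hy.2 hε
      have h4' : ε * ((m:ℝ) + 1) ≤ ε * (k:ℝ) := mul_le_mul_of_nonneg_left hmk hε.le
      nlinarith
    rw [hper]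
    exact ⟨hz0, hz1, h4, h5⟩

lemma measurable_fst1 : Measurable fun q : (ℝ × ℝ) × ℝ => q.1.1 :=
  measurable_fst.fst

lemma measurable_snd1 : Measurable fun q : (ℝ × ℝ) × ℝ => q.1.2 :=
  measurable_fst.snd

lemma measurableSet_OmegaU (hη : EtaHyp η) : MeasurableSet (OmegaU η) := by
  have hc : Measurable fun q : (ℝ × ℝ) × ℝ => η q.1.1 q.2 :=
    (eta_continuous hη).measurable.comp (measurable_fst1.prodMk measurable_snd)
  have hm : Measurable fun q : (ℝ × ℝ) × ℝ => etaMinus η q.1.1 :=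
    (etaMinus_continuous hη).measurable.comp measurable_fst1
  have hp : Measurable fun q : (ℝ × ℝ) × ℝ => etaPlus η q.1.1 :=
    (etaPlus_continuous hη).measurable.comp measurable_fst1
  have he : OmegaU η = {q : (ℝ × ℝ) × ℝ | 0 < q.1.1} ∩ {q | q.1.1 < 1} ∩
      {q | etaMinus η q.1.1 < q.1.2} ∩ {q | q.1.2 < etaPlus η q.1.1} ∩
      {q | (0:ℝ) ≤ q.2} ∩ {q | q.2 < 1} ∩ {q | q.1.2 < η q.1.1 q.2} := by
    ext q
    simp only [OmegaU, OmegaPlus, Ycell, Set.mem_setOf_eq, Set.mem_inter_iff, Set.mem_Ico]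
    tauto
  rw [he]
  exact ((((((measurableSet_lt measurable_const measurable_fst1).inter
    (measurableSet_lt measurable_fst1 measurable_const)).inter
    (measurableSet_lt hm measurable_snd1)).inter
    (measurableSet_lt measurable_snd1 hp)).inter
    (measurableSet_le measurable_const measurable_snd)).inter
    (measurableSet_lt measurable_snd measurable_const)).inter
    (measurableSet_lt measurable_snd1 hc)

lemma measurableSet_OmegaEpsU (hη : EtaHyp η) (ε : ℝ) :
    MeasurableSet (OmegaEpsU η ε) := by
  have hz : Measurable fun q : (ℝ × ℝ) × ℝ => ε * (⌊q.1.1 / ε⌋ : ℝ) + ε * q.2 := by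
    have h1 : Measurable fun q : (ℝ × ℝ) × ℝ => (⌊q.1.1 / ε⌋ : ℝ) :=
      (measurable_from_top (f := fun n : ℤ => (n : ℝ))).comp
        (Int.measurable_floor.comp (measurable_fst1.div_const ε))
    exact (h1.const_mul ε).add (measurable_snd.const_mul ε)
  have hc : Measurable fun q : (ℝ × ℝ) × ℝ =>
      η (ε * (⌊q.1.1 / ε⌋ : ℝ) + ε * q.2) q.2 :=
    (eta_continuous hη).measurable.comp (hz.prodMk measurable_snd)
  have hm : Measurable fun q : (ℝ × ℝ) × ℝ =>
      etaMinus η (ε * (⌊q.1.1 / ε⌋ : ℝ) + ε * q.2) :=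
    (etaMinus_continuous hη).measurable.comp hz
  have he : OmegaEpsU η ε = {q : (ℝ × ℝ) × ℝ | 0 < q.1.1} ∩ {q | q.1.1 < 1} ∩
      {q | (0:ℝ) ≤ q.2} ∩ {q | q.2 < 1} ∩
      {q | etaMinus η (ε * (⌊q.1.1 / ε⌋ : ℝ) + ε * q.2) < q.1.2} ∩
      {q | q.1.2 < η (ε * (⌊q.1.1 / ε⌋ : ℝ) + ε * q.2) q.2} := by
    ext q
    simp only [OmegaEpsU, Set.mem_setOf_eq, Set.mem_inter_iff, Set.mem_Ico]
    tauto
  rw [he]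
  exact (((((measurableSet_lt measurable_const measurable_fst1).inter
    (measurableSet_lt measurable_fst1 measurable_const)).inter
    (measurableSet_le measurable_const measurable_snd)).inter
    (measurableSet_lt measurable_snd measurable_const)).inter
    (measurableSet_lt hm measurable_snd1)).inter
    (measurableSet_lt measurable_snd1 hc)

lemma slab2 (c : ℝ → ℝ) (hc : Measurable c) {δ : ℝ} (hδ : 0 ≤ δ) :
    volume {x : ℝ × ℝ | x.1 ∈ Set.Ioo (0:ℝ) 1 ∧ |x.2 - c x.1| ≤ δ} ≤
      ENNReal.ofReal (2 * δ) := by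
  set S : Set (ℝ × ℝ) := {x : ℝ × ℝ | x.1 ∈ Set.Ioo (0:ℝ) 1 ∧ |x.2 - c x.1| ≤ δ}
    with hS
  have hms : MeasurableSet S := by
    have h1 : MeasurableSet {x : ℝ × ℝ | x.1 ∈ Set.Ioo (0:ℝ) 1} :=
      measurable_fst measurableSet_Ioo
    have h2 : MeasurableSet {x : ℝ × ℝ | |x.2 - c x.1| ≤ δ} :=
      measurableSet_le (measurable_snd.sub (hc.comp measurable_fst)).abs
        measurable_const
    exact h1.inter h2
  rw [MeasureTheory.Measure.volume_eq_prod, MeasureTheory.Measure.prod_apply hms]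
  have hb : ∀ t : ℝ, volume (Prod.mk t ⁻¹' S) ≤
      (Set.Ioo (0:ℝ) 1).indicator (fun _ => ENNReal.ofReal (2 * δ)) t := by
    intro t
    by_cases ht : t ∈ Set.Ioo (0:ℝ) 1
    · rw [Set.indicator_of_mem ht]
      have hsub : Prod.mk t ⁻¹' S ⊆ Set.Icc (c t - δ) (c t + δ) := by
        rintro x ⟨-, h2⟩
        have h3 := abs_le.mp h2
        exact ⟨by linarith [h3.1], by linarith [h3.2]⟩
      calc volume (Prod.mk t ⁻¹' S) ≤ volume (Set.Icc (c t - δ) (c t + δ)) :=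
            measure_mono hsub
        _ = ENNReal.ofReal (2 * δ) := by rw [Real.volume_Icc]; congr 1; ring
    · rw [Set.indicator_of_notMem ht]
      have hemp : Prod.mk t ⁻¹' S = ∅ := by
        ext x
        simp only [Set.mem_preimage, hS, Set.mem_setOf_eq, Set.mem_empty_iff_false,
          iff_false, not_and]
        exact fun h => absurd h ht
      simp [hemp]
  calc ∫⁻ t, volume (Prod.mk t ⁻¹' S) ≤
      ∫⁻ t, (Set.Ioo (0:ℝ) 1).indicator (fun _ => ENNReal.ofReal (2 * δ)) t :=
        MeasureTheory.lintegral_mono hb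
    _ = ENNReal.ofReal (2 * δ) := by
        rw [MeasureTheory.lintegral_indicator measurableSet_Ioo,
          MeasureTheory.setLIntegral_const, Real.volume_Ioo]
        simp

lemma slab3 (c : ℝ → ℝ → ℝ) (hc : Continuous fun q : ℝ × ℝ => c q.1 q.2)
    {δ : ℝ} (hδ : 0 ≤ δ) :
    volume {q : (ℝ × ℝ) × ℝ | q.1.1 ∈ Set.Ioo (0:ℝ) 1 ∧ q.2 ∈ Set.Ico (0:ℝ) 1 ∧
      |q.1.2 - c q.1.1 q.2| ≤ δ} ≤ ENNReal.ofReal (2 * δ) := by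
  set S : Set ((ℝ × ℝ) × ℝ) := {q : (ℝ × ℝ) × ℝ | q.1.1 ∈ Set.Ioo (0:ℝ) 1 ∧
    q.2 ∈ Set.Ico (0:ℝ) 1 ∧ |q.1.2 - c q.1.1 q.2| ≤ δ} with hS
  have hcm : Measurable fun q : (ℝ × ℝ) × ℝ => c q.1.1 q.2 :=
    hc.measurable.comp (measurable_fst1.prodMk measurable_snd)
  have hms : MeasurableSet S := by
    have h1 : MeasurableSet {q : (ℝ × ℝ) × ℝ | q.1.1 ∈ Set.Ioo (0:ℝ) 1} :=
      measurable_fst1 measurableSet_Ioo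
    have h2 : MeasurableSet {q : (ℝ × ℝ) × ℝ | q.2 ∈ Set.Ico (0:ℝ) 1} :=
      measurable_snd measurableSet_Ico
    have h3 : MeasurableSet {q : (ℝ × ℝ) × ℝ | |q.1.2 - c q.1.1 q.2| ≤ δ} :=
      measurableSet_le (measurable_snd1.sub hcm).abs measurable_const
    exact h1.inter (h2.inter h3)
  rw [MeasureTheory.Measure.volume_eq_prod, MeasureTheory.Measure.prod_apply_symm hms]
  have hb : ∀ y : ℝ, volume ((fun x => (x, y)) ⁻¹' S) ≤
      (Set.Ico (0:ℝ) 1).indicator (fun _ => ENNReal.ofReal (2 * δ)) y := by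
    intro y
    by_cases hy : y ∈ Set.Ico (0:ℝ) 1
    · rw [Set.indicator_of_mem hy]
      have heq : (fun x => (x, y)) ⁻¹' S =
          {x : ℝ × ℝ | x.1 ∈ Set.Ioo (0:ℝ) 1 ∧ |x.2 - c x.1 y| ≤ δ} := by
        ext x
        simp only [Set.mem_preimage, hS, Set.mem_setOf_eq, hy, true_and]
      rw [heq]
      exact slab2 (fun t => c t y)
        ((hc.comp (continuous_id.prodMk continuous_const)).measurable) hδ
    · rw [Set.indicator_of_notMem hy]
      have hemp : (fun x : ℝ × ℝ => (x, y)) ⁻¹' S = ∅ := by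
        ext x
        simp only [Set.mem_preimage, hS, Set.mem_setOf_eq, Set.mem_empty_iff_false,
          iff_false]
        exact fun h => hy h.2.1
      simp [hemp]
  calc ∫⁻ y, volume ((fun x => (x, y)) ⁻¹' S) ≤
      ∫⁻ y, (Set.Ico (0:ℝ) 1).indicator (fun _ => ENNReal.ofReal (2 * δ)) y :=
        MeasureTheory.lintegral_mono hb
    _ = ENNReal.ofReal (2 * δ) := by
        rw [MeasureTheory.lintegral_indicator measurableSet_Ico,
          MeasureTheory.setLIntegral_const, Real.volume_Ico]
        simp

lemma symmdiff_subset (hη : EtaHyp η) {K : NNReal}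
    (hK : LipschitzWith K fun q : ℝ × ℝ => η q.1 q.2) {k : ℕ} (hk : 1 ≤ k) :
    (OmegaEpsU η (1/(k:ℝ)) \ OmegaU η) ∪ (OmegaU η \ OmegaEpsU η (1/(k:ℝ))) ⊆
      {q : (ℝ × ℝ) × ℝ | q.1.1 ∈ Set.Ioo (0:ℝ) 1 ∧ q.2 ∈ Set.Ico (0:ℝ) 1 ∧
        (|q.1.2 - η q.1.1 q.2| ≤ (K:ℝ) * (1/(k:ℝ)) ∨
         |q.1.2 - etaMinus η q.1.1| ≤ (K:ℝ) * (1/(k:ℝ)))} := by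
  intro q hq
  set ε : ℝ := 1/(k:ℝ) with hεdef
  have hkR : (0:ℝ) < k := by exact_mod_cast hk
  have hε : 0 < ε := by positivity
  have hfl : ε * (⌊q.1.1 / ε⌋ : ℝ) ≤ q.1.1 := by
    have h := Int.floor_le (q.1.1 / ε)
    rw [le_div_iff₀ hε] at h
    linarith
  have hfl2 : q.1.1 < ε * ((⌊q.1.1 / ε⌋ : ℝ) + 1) := by
    have h := Int.lt_floor_add_one (q.1.1 / ε)
    rw [div_lt_iff₀ hε] at h
    linarith
  have hKε : (0:ℝ) ≤ (K:ℝ) * ε := by positivity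
  have key : q.2 ∈ Set.Ico (0:ℝ) 1 →
      |η (ε * (⌊q.1.1 / ε⌋ : ℝ) + ε * q.2) q.2 - η q.1.1 q.2| ≤ (K:ℝ) * ε ∧
      |etaMinus η (ε * (⌊q.1.1 / ε⌋ : ℝ) + ε * q.2) - etaMinus η q.1.1| ≤ (K:ℝ) * ε := by
    intro hy
    have h1 : 0 ≤ ε * q.2 := mul_nonneg hε.le hy.1
    have h2 : ε * q.2 ≤ ε * 1 := mul_le_mul_of_nonneg_left hy.2.le hε.le
    have hz : |ε * (⌊q.1.1 / ε⌋ : ℝ) + ε * q.2 - q.1.1| ≤ ε := by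
      rw [abs_le]
      rw [mul_add] at hfl2
      constructor
      · linarith
      · linarith
    constructor
    · exact le_trans (eta_lip_fst hK _ q.1.1 q.2)
        (mul_le_mul_of_nonneg_left hz K.coe_nonneg)
    · exact le_trans (etaMinus_lip hη hK _ q.1.1)
        (mul_le_mul_of_nonneg_left hz K.coe_nonneg)
  rcases hq with ⟨hA, hnB⟩ | ⟨hB, hnA⟩
  · obtain ⟨h1, h2, h3, h4, h5⟩ := hA
    obtain ⟨hax, ham⟩ := key h3
    have haxm := abs_le.mp hax
    have hamm := abs_le.mp ham
    refine ⟨⟨h1, h2⟩, h3, ?_⟩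
    by_cases c1 : q.1.2 < η q.1.1 q.2
    · by_cases c2 : etaMinus η q.1.1 < q.1.2
      · have c3 : ¬ q.1.2 < etaPlus η q.1.1 :=
          fun c3 => hnB ⟨⟨h1, h2, c2, c3⟩, ⟨h3, c1⟩⟩
        push_neg at c3
        have hle : η q.1.1 q.2 ≤ etaPlus η q.1.1 :=
          le_etaPlus hη ⟨h3.1, h3.2.le⟩
        left
        rw [abs_le]
        exact ⟨by linarith, by linarith⟩
      · push_neg at c2
        right
        rw [abs_le]
        exact ⟨by linarith, by linarith⟩
    · push_neg at c1
      left
      rw [abs_le]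
      exact ⟨by linarith, by linarith⟩
  · obtain ⟨⟨h1, h2, h3, h4⟩, hy, h5⟩ := hB
    obtain ⟨hax, ham⟩ := key hy
    have haxm := abs_le.mp hax
    have hamm := abs_le.mp ham
    refine ⟨⟨h1, h2⟩, hy, ?_⟩
    by_cases c1 : etaMinus η (ε * (⌊q.1.1 / ε⌋ : ℝ) + ε * q.2) < q.1.2
    · have c2 : ¬ q.1.2 < η (ε * (⌊q.1.1 / ε⌋ : ℝ) + ε * q.2) q.2 :=
        fun c2 => hnA ⟨h1, h2, hy, c1, c2⟩
      push_neg at c2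
      left
      rw [abs_le]
      exact ⟨by linarith, by linarith⟩
    · push_neg at c1
      right
      rw [abs_le]
      exact ⟨by linarith, by linarith⟩

lemma indicator_sub_rpow {α : Type*} (A B : Set α) {p : ℝ} (hp : 1 ≤ p) (q : α) :
    |A.indicator (fun _ => (1:ℝ)) q - B.indicator (fun _ => (1:ℝ)) q| ^ p
      = ((A \ B) ∪ (B \ A)).indicator (fun _ => (1:ℝ)) q := by
  have hp0 : p ≠ 0 := by linarith
  by_cases hA : q ∈ A <;> by_cases hB : q ∈ B <;>
    simp [Set.indicator_apply, hA, hB, Real.zero_rpow hp0, Real.one_rpow,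
      Set.mem_union, Set.mem_diff, zero_sub, abs_neg, abs_one, sub_self, abs_zero]

end UnfoldAux

/-- `T_ε(χ_{Ω_ε⁺}) = χ_{Ω_ε^u}` (as elements of `L^p`, i.e. a.e. on
`ℝ² × [0,1)`), and `χ_{Ω_ε^u} → χ_{Ω_u⁺}` strongly in `L^p(ℝ² × [0,1))` for every
`1 ≤ p < ∞`. -/
theorem unfold_indicator_and_strong_convergence (η : ℝ → ℝ → ℝ) (hη : EtaHyp η) :
    (∀ k : ℕ, 1 ≤ k →
      ∀ᵐ p : (ℝ × ℝ) × ℝ, p.2 ∈ Ico (0 : ℝ) 1 →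
        unfold (1 / (k : ℝ)) ((OmegaEpsPlus η (1 / (k : ℝ))).indicator fun _ => (1 : ℝ)) p
          = (OmegaEpsU η (1 / (k : ℝ))).indicator (fun _ => (1 : ℝ)) p) ∧
    (∀ p : ℝ, 1 ≤ p →
      Tendsto (fun k : ℕ => ∫ q in {q : (ℝ × ℝ) × ℝ | q.2 ∈ Ico (0 : ℝ) 1},
          |(OmegaEpsU η (1 / (k : ℝ))).indicator (fun _ => (1 : ℝ)) q
            - (OmegaU η).indicator (fun _ => (1 : ℝ)) q| ^ p)
        atTop (𝓝 0)) := by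
  classical
  obtain ⟨K, hK⟩ := hη.lip
  constructor
  · -- Part 1: the unfolding identity, a.e.
    intro k hk
    have hzero1 : volume {q : (ℝ × ℝ) × ℝ | q.1.1 = 0} = 0 := by
      have he : {q : (ℝ × ℝ) × ℝ | q.1.1 = 0} =
          (({(0:ℝ)} ×ˢ (Set.univ : Set ℝ)) ×ˢ (Set.univ : Set ℝ)) := by
        ext q
        simp only [Set.mem_setOf_eq, Set.mem_prod, Set.mem_singleton_iff,
          Set.mem_univ, and_true]
      rw [he, MeasureTheory.Measure.volume_eq_prod, MeasureTheory.Measure.prod_prod,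
        MeasureTheory.Measure.volume_eq_prod, MeasureTheory.Measure.prod_prod]
      simp
    have hzero2 : volume {q : (ℝ × ℝ) × ℝ | q.2 = 0} = 0 := by
      have he : {q : (ℝ × ℝ) × ℝ | q.2 = 0} =
          ((Set.univ : Set (ℝ × ℝ)) ×ˢ ({(0:ℝ)} : Set ℝ)) := by
        ext q
        simp only [Set.mem_setOf_eq, Set.mem_prod, Set.mem_singleton_iff,
          Set.mem_univ, true_and]
      rw [he, MeasureTheory.Measure.volume_eq_prod, MeasureTheory.Measure.prod_prod]
      simp
    have h1 : ∀ᵐ q : (ℝ × ℝ) × ℝ, q.1.1 ≠ 0 := by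
      rw [MeasureTheory.ae_iff]
      have he : {q : (ℝ × ℝ) × ℝ | ¬ q.1.1 ≠ 0} = {q : (ℝ × ℝ) × ℝ | q.1.1 = 0} := by
        ext q; simp
      rw [he]; exact hzero1
    have h2 : ∀ᵐ q : (ℝ × ℝ) × ℝ, q.2 ≠ 0 := by
      rw [MeasureTheory.ae_iff]
      have he : {q : (ℝ × ℝ) × ℝ | ¬ q.2 ≠ 0} = {q : (ℝ × ℝ) × ℝ | q.2 = 0} := by
        ext q; simp
      rw [he]; exact hzero2
    filter_upwards [h1, h2] with q hq1 hq2 hIco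
    have hiff := UnfoldAux.mem_iff hη hk q hq1 hq2 hIco
    show ((OmegaEpsPlus η (1/(k:ℝ))).indicator (fun _ => (1:ℝ)))
        ((1/(k:ℝ)) * (⌊q.1.1 / (1/(k:ℝ))⌋ : ℝ) + (1/(k:ℝ)) * q.2, q.1.2)
      = (OmegaEpsU η (1/(k:ℝ))).indicator (fun _ => (1:ℝ)) q
    by_cases h : q ∈ OmegaEpsU η (1/(k:ℝ))
    · rw [Set.indicator_of_mem (hiff.mpr h), Set.indicator_of_mem h]
    · rw [Set.indicator_of_notMem (fun hm => h (hiff.mp hm)),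
        Set.indicator_of_notMem h]
  · -- Part 2: strong convergence
    intro p hp
    have hB : MeasurableSet (OmegaU η) := UnfoldAux.measurableSet_OmegaU hη
    have hbound : ∀ k : ℕ, 1 ≤ k →
        (∫ q in {q : (ℝ × ℝ) × ℝ | q.2 ∈ Ico (0:ℝ) 1},
          |(OmegaEpsU η (1 / (k : ℝ))).indicator (fun _ => (1 : ℝ)) q
            - (OmegaU η).indicator (fun _ => (1 : ℝ)) q| ^ p)
          ≤ 4 * ((K:ℝ) * (1/(k:ℝ))) := by
      intro k hk
      have hA : MeasurableSet (OmegaEpsU η (1/(k:ℝ))) :=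
        UnfoldAux.measurableSet_OmegaEpsU hη (1/(k:ℝ))
      set D : Set ((ℝ × ℝ) × ℝ) :=
        (OmegaEpsU η (1/(k:ℝ)) \ OmegaU η) ∪ (OmegaU η \ OmegaEpsU η (1/(k:ℝ)))
        with hD
      have hDm : MeasurableSet D := (hA.diff hB).union (hB.diff hA)
      have hkR : (0:ℝ) < k := by exact_mod_cast hk
      have hδ : (0:ℝ) ≤ (K:ℝ) * (1/(k:ℝ)) := by positivity
      have hsub := UnfoldAux.symmdiff_subset hη hK hk
      have hE1 := UnfoldAux.slab3 η hK.continuous hδ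
      have hE2 := UnfoldAux.slab3 (fun t _ => etaMinus η t)
        ((UnfoldAux.etaMinus_continuous hη).comp continuous_fst) hδ
      have hEsub : {q : (ℝ × ℝ) × ℝ | q.1.1 ∈ Set.Ioo (0:ℝ) 1 ∧
            q.2 ∈ Set.Ico (0:ℝ) 1 ∧
            (|q.1.2 - η q.1.1 q.2| ≤ (K:ℝ) * (1/(k:ℝ)) ∨
             |q.1.2 - etaMinus η q.1.1| ≤ (K:ℝ) * (1/(k:ℝ)))} ⊆
          {q : (ℝ × ℝ) × ℝ | q.1.1 ∈ Set.Ioo (0:ℝ) 1 ∧ q.2 ∈ Set.Ico (0:ℝ) 1 ∧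
            |q.1.2 - η q.1.1 q.2| ≤ (K:ℝ) * (1/(k:ℝ))} ∪
          {q : (ℝ × ℝ) × ℝ | q.1.1 ∈ Set.Ioo (0:ℝ) 1 ∧ q.2 ∈ Set.Ico (0:ℝ) 1 ∧
            |q.1.2 - etaMinus η q.1.1| ≤ (K:ℝ) * (1/(k:ℝ))} := by
        rintro q ⟨hq1, hq2, hq3 | hq3⟩
        · exact Or.inl ⟨hq1, hq2, hq3⟩
        · exact Or.inr ⟨hq1, hq2, hq3⟩
      have hvol : volume D ≤ ENNReal.ofReal (4 * ((K:ℝ) * (1/(k:ℝ)))) := by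
        calc volume D ≤ _ := measure_mono (hsub.trans hEsub)
          _ ≤ _ + _ := measure_union_le _ _
          _ ≤ ENNReal.ofReal (2 * ((K:ℝ) * (1/(k:ℝ)))) +
              ENNReal.ofReal (2 * ((K:ℝ) * (1/(k:ℝ)))) := add_le_add hE1 hE2
          _ = ENNReal.ofReal (4 * ((K:ℝ) * (1/(k:ℝ)))) := by
              rw [← ENNReal.ofReal_add (by positivity) (by positivity)]
              congr 1
              ring
      have heq : (∫ q in {q : (ℝ × ℝ) × ℝ | q.2 ∈ Ico (0:ℝ) 1},
          |(OmegaEpsU η (1 / (k : ℝ))).indicator (fun _ => (1 : ℝ)) q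
            - (OmegaU η).indicator (fun _ => (1 : ℝ)) q| ^ p)
          = (volume (D ∩ {q : (ℝ × ℝ) × ℝ | q.2 ∈ Ico (0:ℝ) 1})).toReal := by
        have hfun : (fun q : (ℝ × ℝ) × ℝ =>
            |(OmegaEpsU η (1 / (k : ℝ))).indicator (fun _ => (1 : ℝ)) q
              - (OmegaU η).indicator (fun _ => (1 : ℝ)) q| ^ p)
            = D.indicator (fun _ => (1:ℝ)) :=
          funext fun q => UnfoldAux.indicator_sub_rpow _ _ hp q
        rw [hfun, MeasureTheory.integral_indicator_const (1:ℝ) hDm,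
          MeasureTheory.measureReal_def, MeasureTheory.Measure.restrict_apply hDm]
        simp
      rw [heq]
      have hle : volume (D ∩ {q : (ℝ × ℝ) × ℝ | q.2 ∈ Ico (0:ℝ) 1}) ≤
          ENNReal.ofReal (4 * ((K:ℝ) * (1/(k:ℝ)))) :=
        le_trans (measure_mono Set.inter_subset_left) hvol
      exact ENNReal.toReal_le_of_le_ofReal (by positivity) hle
    apply squeeze_zero'
      (g := fun k : ℕ => 4 * ((K:ℝ) * (1/(k:ℝ))))
    · filter_upwards with k
      apply MeasureTheory.integral_nonneg
      intro q
      exact Real.rpow_nonneg (abs_nonneg _) p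
    · filter_upwards [Filter.eventually_ge_atTop 1] with k hk
      exact hbound k hk
    · have hfe : (fun k : ℕ => 4 * ((K:ℝ) * (1/(k:ℝ)))) =
          fun k : ℕ => (4 * (K:ℝ)) / (k:ℝ) := by
        funext k
        ring
      rw [hfe]
      exact tendsto_const_div_atTop_nhds_zero_nat (4 * (K:ℝ))

end
end

section
/- (Unfolding lemma) Let p > 1 and C > 0. There exists a constant C′ > 0, depending only on p, C and η, such that for every ε = 1/k and every measurable v : Ω → ℝ with ‖v‖_{L^p(Ω)} ≤ C, one has |∫_{Ω_ε⁺} v dx − ∫_{Ω_u⁺} T_ε(v·χ_{Ω_ε⁺})(x,y) dx dy| ≤ C′ ε^{1 − 1/p}. -/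
open MeasureTheory Set Filter Topology

noncomputable section

open scoped ENNReal NNReal




section EtaFacts

variable {η : ℝ → ℝ → ℝ} {K : NNReal}
  (hlip : LipschitzWith K fun p : ℝ × ℝ => η p.1 p.2)
  (hper : ∀ t y, η t (y + 1) = η t y)

-- pointwise Lipschitz in first variable
theorem eta_lip1 (hlip : LipschitzWith K fun p : ℝ × ℝ => η p.1 p.2) (s t y : ℝ) :
    |η s y - η t y| ≤ (K : ℝ) * |s - t| := by
  have := hlip.dist_le_mul (s, y) (t, y)
  simpa [Real.dist_eq, Prod.dist_eq, dist_self] using this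

theorem eta_cont (hlip : LipschitzWith K fun p : ℝ × ℝ => η p.1 p.2) :
    Continuous fun p : ℝ × ℝ => η p.1 p.2 := hlip.continuous

theorem eta_cont1 (hlip : LipschitzWith K fun p : ℝ × ℝ => η p.1 p.2) (t : ℝ) :
    Continuous (η t) := (eta_cont hlip).comp (continuous_const.prodMk continuous_id)

theorem eta_img_nonempty (t : ℝ) : (η t '' Icc 0 1).Nonempty :=
  (nonempty_Icc.2 zero_le_one).image _

theorem eta_bddBelow (hlip : LipschitzWith K fun p : ℝ × ℝ => η p.1 p.2) (t : ℝ) :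
    BddBelow (η t '' Icc 0 1) :=
  (isCompact_Icc.image (eta_cont1 hlip t)).bddBelow

theorem eta_bddAbove (hlip : LipschitzWith K fun p : ℝ × ℝ => η p.1 p.2) (t : ℝ) :
    BddAbove (η t '' Icc 0 1) :=
  (isCompact_Icc.image (eta_cont1 hlip t)).bddAbove

theorem etaMinus_le (hlip : LipschitzWith K fun p : ℝ × ℝ => η p.1 p.2)
    (t : ℝ) {y : ℝ} (hy : y ∈ Icc (0:ℝ) 1) : etaMinus η t ≤ η t y :=
  csInf_le (eta_bddBelow hlip t) (mem_image_of_mem _ hy)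

theorem le_etaPlus (hlip : LipschitzWith K fun p : ℝ × ℝ => η p.1 p.2)
    (t : ℝ) {y : ℝ} (hy : y ∈ Icc (0:ℝ) 1) : η t y ≤ etaPlus η t :=
  le_csSup (eta_bddAbove hlip t) (mem_image_of_mem _ hy)

theorem eta_sub_int (hper : ∀ t y, η t (y + 1) = η t y) (t x : ℝ) (n : ℤ) :
    η t (x - n) = η t x := by
  have hp : Function.Periodic (η t) 1 := fun y => hper t y
  simpa using hp.sub_int_mul_eq (x := x) n

theorem eta_fract (hper : ∀ t y, η t (y + 1) = η t y) (t x : ℝ) :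
    η t (Int.fract x) = η t x := eta_sub_int hper t x ⌊x⌋

theorem etaMinus_le' (hlip : LipschitzWith K fun p : ℝ × ℝ => η p.1 p.2)
    (hper : ∀ t y, η t (y + 1) = η t y) (t s : ℝ) : etaMinus η t ≤ η t s := by
  rw [← eta_fract hper t s]
  exact etaMinus_le hlip t ⟨Int.fract_nonneg _, (Int.fract_lt_one _).le⟩

theorem le_etaPlus' (hlip : LipschitzWith K fun p : ℝ × ℝ => η p.1 p.2)
    (hper : ∀ t y, η t (y + 1) = η t y) (t s : ℝ) : η t s ≤ etaPlus η t := by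
  rw [← eta_fract hper t s]
  exact le_etaPlus hlip t ⟨Int.fract_nonneg _, (Int.fract_lt_one _).le⟩

theorem etaMinus_lip (hlip : LipschitzWith K fun p : ℝ × ℝ => η p.1 p.2) (s t : ℝ) :
    |etaMinus η s - etaMinus η t| ≤ (K : ℝ) * |s - t| := by
  have key : ∀ a b : ℝ, etaMinus η a - etaMinus η b ≤ (K : ℝ) * |a - b| := by
    intro a b
    have h1 : etaMinus η a - (K : ℝ) * |a - b| ≤ etaMinus η b := by
      apply le_csInf (eta_img_nonempty b)
      rintro z ⟨y, hy, rfl⟩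
      have h3 := etaMinus_le hlip a hy
      have h2 := eta_lip1 hlip a b y
      have h4 := (abs_le.1 h2).2
      linarith
    linarith
  have h1 := key s t
  have h2 := key t s
  rw [abs_sub_comm] at h2
  exact abs_le.2 ⟨by linarith, h1⟩

theorem etaPlus_lip (hlip : LipschitzWith K fun p : ℝ × ℝ => η p.1 p.2) (s t : ℝ) :
    |etaPlus η s - etaPlus η t| ≤ (K : ℝ) * |s - t| := by
  have key : ∀ a b : ℝ, etaPlus η a - etaPlus η b ≤ (K : ℝ) * |a - b| := by
    intro a b
    have h1 : etaPlus η a ≤ etaPlus η b + (K : ℝ) * |a - b| := by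
      apply csSup_le (eta_img_nonempty a)
      rintro z ⟨y, hy, rfl⟩
      have := le_etaPlus hlip b hy
      have h2 := eta_lip1 hlip a b y
      have := abs_le.1 h2
      linarith [this.1]
    linarith
  have h1 := key s t
  have h2 := key t s
  rw [abs_sub_comm] at h2
  exact abs_le.2 ⟨by linarith, h1⟩

theorem etaMinus_cont (hlip : LipschitzWith K fun p : ℝ × ℝ => η p.1 p.2) :
    Continuous (etaMinus η) := by
  apply (LipschitzWith.of_dist_le_mul (K := K) (f := etaMinus η) ?_).continuous
  intro s t; rw [Real.dist_eq, Real.dist_eq]; exact etaMinus_lip hlip s t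

theorem etaPlus_cont (hlip : LipschitzWith K fun p : ℝ × ℝ => η p.1 p.2) :
    Continuous (etaPlus η) := by
  apply (LipschitzWith.of_dist_le_mul (K := K) (f := etaPlus η) ?_).continuous
  intro s t; rw [Real.dist_eq, Real.dist_eq]; exact etaPlus_lip hlip s t

theorem le_etaMinus {c : ℝ} (hpos : ∀ t y, c ≤ η t y) (t : ℝ) : c ≤ etaMinus η t := by
  apply le_csInf (eta_img_nonempty t)
  rintro z ⟨y, _, rfl⟩; exact hpos t y

theorem etaPlus_bound (hlip : LipschitzWith K fun p : ℝ × ℝ => η p.1 p.2)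
    {t : ℝ} (ht : t ∈ Icc (0:ℝ) 1) : etaPlus η t ≤ η 0 0 + 2 * (K : ℝ) := by
  apply csSup_le (eta_img_nonempty t)
  rintro z ⟨y, hy, rfl⟩
  have h := hlip.dist_le_mul (t, y) (0, 0)
  rw [Prod.dist_eq, Real.dist_eq] at h
  simp only [Real.dist_eq, sub_zero] at h
  have habs : |η t y - η 0 0| ≤ (K:ℝ) * max |t| |y| := h
  have h1 : |t| ≤ 1 := by rw [abs_le]; constructor <;> [linarith [ht.1]; exact ht.2]
  have h2 : |y| ≤ 1 := by rw [abs_le]; constructor <;> [linarith [hy.1]; exact hy.2]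
  have hm : max |t| |y| ≤ 1 := max_le h1 h2
  have h5 := (abs_le.1 habs).2
  have hKm : (K:ℝ) * (|t| ⊔ |y|) ≤ (K:ℝ) * 1 :=
    mul_le_mul_of_nonneg_left hm K.coe_nonneg
  have hK0 : (0:ℝ) ≤ K := K.coe_nonneg
  linarith

end EtaFacts



section Core

variable {k : ℕ} {ε : ℝ}

theorem cell_partition (hε : 0 < ε) (hεk : (k:ℝ) * ε = 1) :
    Ico (0:ℝ) 1 = ⋃ j ∈ Finset.range k, Ico ((j:ℝ)*ε) (((j:ℝ)+1)*ε) := by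
  ext x
  simp only [mem_Ico, Finset.mem_range, mem_iUnion, exists_prop]
  constructor
  · rintro ⟨h0, h1⟩
    have hxε : 0 ≤ x / ε := div_nonneg h0 hε.le
    refine ⟨⌊x/ε⌋.toNat, ?_, ?_, ?_⟩
    · have hlt : x / ε < k := by
        rw [div_lt_iff₀ hε]
        calc x < 1 := h1
        _ = k * ε := hεk.symm
      have : (⌊x/ε⌋ : ℝ) < (k:ℝ) := lt_of_le_of_lt (Int.floor_le _) hlt
      have h2 : ⌊x/ε⌋ < (k:ℤ) := by exact_mod_cast this
      have h4 : (0:ℤ) ≤ ⌊x/ε⌋ := Int.floor_nonneg.2 hxε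
      omega
    · have : ((⌊x/ε⌋.toNat : ℤ) : ℝ) ≤ x / ε := by
        rw [Int.toNat_of_nonneg (Int.floor_nonneg.2 hxε)]
        exact Int.floor_le _
      calc ((⌊x/ε⌋.toNat : ℕ) : ℝ) * ε ≤ (x/ε) * ε := by
            apply mul_le_mul_of_nonneg_right _ hε.le
            exact_mod_cast this
        _ = x := div_mul_cancel₀ x hε.ne'
    · have : x / ε < (⌊x/ε⌋ : ℝ) + 1 := Int.lt_floor_add_one _
      have h3 : x / ε < ((⌊x/ε⌋.toNat : ℕ) : ℝ) + 1 := by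
        rwa [show ((⌊x/ε⌋.toNat : ℕ) : ℝ) = (⌊x/ε⌋ : ℝ) by
          exact_mod_cast congrArg Int.cast (Int.toNat_of_nonneg (Int.floor_nonneg.2 hxε))]
      calc x = (x/ε) * ε := (div_mul_cancel₀ x hε.ne').symm
        _ < (((⌊x/ε⌋.toNat : ℕ) : ℝ) + 1) * ε := by
            apply mul_lt_mul_of_pos_right h3 hε
  · rintro ⟨j, hj, hjx, hjx'⟩
    constructor
    · calc (0:ℝ) ≤ (j:ℝ) * ε := by positivity
        _ ≤ x := hjx
    · calc x < ((j:ℝ)+1) * ε := hjx'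
        _ ≤ (k:ℝ) * ε := by
            apply mul_le_mul_of_nonneg_right _ hε.le
            exact_mod_cast Nat.succ_le_of_lt hj
        _ = 1 := hεk

theorem floor_on_cell (hε : 0 < ε) {j : ℕ} {x : ℝ}
    (hx : x ∈ Ico ((j:ℝ)*ε) (((j:ℝ)+1)*ε)) : ⌊x/ε⌋ = (j:ℤ) := by
  rw [Int.floor_eq_iff]
  constructor
  · rw [le_div_iff₀ hε]
    simpa using hx.1
  · rw [div_lt_iff₀ hε]
    push_cast
    simpa using hx.2

theorem cells_disjoint (hε : 0 < ε) :
    Set.PairwiseDisjoint (↑(Finset.range k))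
      (fun j : ℕ => Ico ((j:ℝ)*ε) (((j:ℝ)+1)*ε)) := by
  have key : ∀ i j : ℕ, i < j →
      Disjoint (Ico ((i:ℝ)*ε) (((i:ℝ)+1)*ε)) (Ico ((j:ℝ)*ε) (((j:ℝ)+1)*ε)) := by
    intro i j h
    have hle : ((i:ℝ)+1)*ε ≤ (j:ℝ)*ε := by
      apply mul_le_mul_of_nonneg_right _ hε.le
      exact_mod_cast Nat.succ_le_of_lt h
    exact Set.Ico_disjoint_Ico.2 (le_trans (min_le_left _ _) (hle.trans (le_max_right _ _)))
  intro i _ j _ hij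
  rcases hij.lt_or_gt with h | h
  · exact key i j h
  · exact (key j i h).symm

theorem affine_preimage_volume (hε : 0 < ε) (a : ℝ) (S : Set ℝ) :
    volume ((fun b => a + ε * b) ⁻¹' S) = ENNReal.ofReal ε⁻¹ * volume S := by
  have : (fun b : ℝ => a + ε * b) = (fun x : ℝ => a + x) ∘ (fun b : ℝ => ε * b) := rfl
  rw [this, preimage_comp]
  rw [Real.volume_preimage_mul_left hε.ne' ((fun x : ℝ => a + x) ⁻¹' S)]
  rw [abs_of_pos (inv_pos.2 hε)]
  congr 1
  exact measure_preimage_add volume a S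

end Core

section MP
variable {k : ℕ} {ε : ℝ}

theorem psi_measurable (ε : ℝ) :
    Measurable (fun q : ℝ × ℝ => ε * (⌊q.1/ε⌋ : ℝ) + ε * q.2) := by
  apply Measurable.add
  · exact (measurable_const.mul
      ((measurable_from_top (f := fun n : ℤ => (n:ℝ))).comp
        ((measurable_fst.div_const ε).floor)))
  · exact measurable_const.mul measurable_snd

theorem psi_measurePreserving (hε : 0 < ε) (hεk : (k:ℝ) * ε = 1) :
    MeasurePreserving (fun q : ℝ × ℝ => ε * (⌊q.1/ε⌋ : ℝ) + ε * q.2)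
      ((volume.restrict (Ico (0:ℝ) 1)).prod (volume.restrict (Ico (0:ℝ) 1)))
      (volume.restrict (Ico (0:ℝ) 1)) := by
  refine ⟨psi_measurable ε, ?_⟩
  apply Measure.ext fun A hA => ?_
  rw [Measure.map_apply (psi_measurable ε) hA,
    Measure.prod_apply ((psi_measurable ε) hA)]
  have hinner : ∀ a : ℝ,
      (volume.restrict (Ico (0:ℝ) 1))
        (Prod.mk a ⁻¹' ((fun q : ℝ × ℝ => ε * (⌊q.1/ε⌋ : ℝ) + ε * q.2) ⁻¹' A))
      = volume ({b : ℝ | ε * (⌊a/ε⌋ : ℝ) + ε * b ∈ A} ∩ Ico 0 1) := by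
    intro a
    rw [Measure.restrict_apply' measurableSet_Ico]
    rfl
  rw [lintegral_congr hinner]
  set F := fun a : ℝ => volume ({b : ℝ | ε * (⌊a/ε⌋ : ℝ) + ε * b ∈ A} ∩ Ico 0 1) with hF
  have hcell : ∀ j ∈ Finset.range k,
      (∫⁻ a in Ico ((j:ℝ)*ε) (((j:ℝ)+1)*ε), F a ∂volume)
      = volume (A ∩ Ico ((j:ℝ)*ε) (((j:ℝ)+1)*ε)) := by
    intro j _
    have hval : ∀ a ∈ Ico ((j:ℝ)*ε) (((j:ℝ)+1)*ε),
        F a = ENNReal.ofReal ε⁻¹ * volume (A ∩ Ico ((j:ℝ)*ε) (((j:ℝ)+1)*ε)) := by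
      intro a ha
      rw [hF]
      simp only
      rw [floor_on_cell hε ha]
      have hset : {b : ℝ | ε * ((j:ℤ):ℝ) + ε * b ∈ A} ∩ Ico 0 1
          = (fun b => ε * (j:ℝ) + ε * b) ⁻¹' (A ∩ Ico ((j:ℝ)*ε) (((j:ℝ)+1)*ε)) := by
        ext b
        simp only [mem_inter_iff, mem_setOf_eq, mem_Ico, mem_preimage, Int.cast_natCast]
        constructor
        · rintro ⟨hbA, hb0, hb1⟩
          exact ⟨hbA, by nlinarith, by nlinarith⟩
        · rintro ⟨hbA, hb0, hb1⟩
          exact ⟨hbA, by nlinarith, by nlinarith⟩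
      rw [hset, affine_preimage_volume hε]
    rw [setLIntegral_congr_fun measurableSet_Ico hval, setLIntegral_const,
      Real.volume_Ico]
    rw [show ((j:ℝ)+1)*ε - (j:ℝ)*ε = ε by ring]
    rw [mul_comm (ENNReal.ofReal ε⁻¹) _, mul_assoc, ← ENNReal.ofReal_mul (by positivity),
      inv_mul_cancel₀ hε.ne', ENNReal.ofReal_one, mul_one]
  rw [cell_partition hε hεk]
  rw [lintegral_biUnion_finset (cells_disjoint hε) (fun j _ => measurableSet_Ico)]
  rw [Finset.sum_congr rfl hcell]
  rw [← measure_biUnion_finset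
    ((cells_disjoint hε (k := k)).mono (fun j => inter_subset_right))
    (fun j _ => hA.inter measurableSet_Ico)]
  rw [show (⋃ j ∈ Finset.range k, A ∩ Ico ((j:ℝ)*ε) (((j:ℝ)+1)*ε))
      = A ∩ ⋃ j ∈ Finset.range k, Ico ((j:ℝ)*ε) (((j:ℝ)+1)*ε) from
    (inter_iUnion₂ A _).symm]
  rw [Measure.restrict_apply hA]


theorem swap23_measurePreserving :
    MeasurePreserving (fun p : (ℝ × ℝ) × ℝ => ((p.1.1, p.2), p.1.2))
      (volume : Measure ((ℝ × ℝ) × ℝ)) (volume : Measure ((ℝ × ℝ) × ℝ)) := by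
  have h1 : MeasurePreserving (MeasurableEquiv.prodAssoc : (ℝ × ℝ) × ℝ ≃ᵐ ℝ × ℝ × ℝ)
      ((volume.prod volume).prod volume) (volume.prod (volume.prod volume)) :=
    measurePreserving_prodAssoc _ _ _
  have h2 : MeasurePreserving (Prod.map (id : ℝ → ℝ) (Prod.swap : ℝ × ℝ → ℝ × ℝ))
      (volume.prod (volume.prod volume)) (volume.prod (volume.prod volume)) :=
    (MeasurePreserving.id _).prod Measure.measurePreserving_swap
  have h3 : MeasurePreserving (MeasurableEquiv.prodAssoc.symm : ℝ × ℝ × ℝ ≃ᵐ (ℝ × ℝ) × ℝ)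
      (volume.prod (volume.prod volume)) ((volume.prod volume).prod volume) :=
    h1.symm _
  have hvol2 : (volume : Measure (ℝ × ℝ)) = volume.prod volume := Measure.volume_eq_prod ℝ ℝ
  have hvol3 : (volume : Measure ((ℝ × ℝ) × ℝ)) = (volume.prod volume).prod volume := by
    rw [Measure.volume_eq_prod, hvol2]
  rw [show (fun p : (ℝ × ℝ) × ℝ => ((p.1.1, p.2), p.1.2))
      = (MeasurableEquiv.prodAssoc.symm : ℝ × ℝ × ℝ ≃ᵐ (ℝ × ℝ) × ℝ)
        ∘ (Prod.map (id : ℝ → ℝ) (Prod.swap : ℝ × ℝ → ℝ × ℝ))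
        ∘ (MeasurableEquiv.prodAssoc : (ℝ × ℝ) × ℝ ≃ᵐ ℝ × ℝ × ℝ) from rfl]
  rw [hvol3]
  exact h3.comp (h2.comp h1)

theorem swap23_restrict_measurePreserving :
    MeasurePreserving (fun p : (ℝ × ℝ) × ℝ => ((p.1.1, p.2), p.1.2))
      (volume.restrict ((Ico (0:ℝ) 1 ×ˢ (univ : Set ℝ)) ×ˢ Ico (0:ℝ) 1))
      (volume.restrict ((Ico (0:ℝ) 1 ×ˢ Ico (0:ℝ) 1) ×ˢ (univ : Set ℝ))) := by
  have hsw := swap23_measurePreserving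
  refine ⟨hsw.measurable, ?_⟩
  have hpre : (fun p : (ℝ × ℝ) × ℝ => ((p.1.1, p.2), p.1.2)) ⁻¹'
      ((Ico (0:ℝ) 1 ×ˢ Ico (0:ℝ) 1) ×ˢ (univ : Set ℝ))
      = (Ico (0:ℝ) 1 ×ˢ (univ : Set ℝ)) ×ˢ Ico (0:ℝ) 1 := by
    ext p
    simp [Set.mem_prod, and_comm]
  rw [← hpre, ← Measure.restrict_map hsw.measurable
    (((measurableSet_Ico.prod measurableSet_Ico)).prod MeasurableSet.univ), hsw.map_eq]

theorem Phi_measurePreserving (hε : 0 < ε) (hεk : (k:ℝ) * ε = 1) :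
    MeasurePreserving (fun p : (ℝ × ℝ) × ℝ => (ε * (⌊p.1.1/ε⌋ : ℝ) + ε * p.2, p.1.2))
      (volume.restrict ((Ico (0:ℝ) 1 ×ˢ (univ : Set ℝ)) ×ˢ Ico (0:ℝ) 1))
      (volume.restrict (Ico (0:ℝ) 1 ×ˢ (univ : Set ℝ))) := by
  have h2 : MeasurePreserving
      (Prod.map (fun q : ℝ × ℝ => ε * (⌊q.1/ε⌋ : ℝ) + ε * q.2) (id : ℝ → ℝ))
      (((volume.restrict (Ico (0:ℝ) 1)).prod (volume.restrict (Ico (0:ℝ) 1))).prod volume)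
      ((volume.restrict (Ico (0:ℝ) 1)).prod volume) :=
    (psi_measurePreserving hε hεk).prod (MeasurePreserving.id _)
  have e1 : volume.restrict ((Ico (0:ℝ) 1 ×ˢ Ico (0:ℝ) 1) ×ˢ (univ : Set ℝ))
      = ((volume.restrict (Ico (0:ℝ) 1)).prod (volume.restrict (Ico (0:ℝ) 1))).prod volume := by
    rw [Measure.prod_restrict, Measure.restrict_prod_eq_prod_univ,
      ← Measure.volume_eq_prod ℝ ℝ, ← Measure.volume_eq_prod (ℝ × ℝ) ℝ]
  have e2 : volume.restrict (Ico (0:ℝ) 1 ×ˢ (univ : Set ℝ))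
      = (volume.restrict (Ico (0:ℝ) 1)).prod volume := by
    rw [Measure.restrict_prod_eq_prod_univ, ← Measure.volume_eq_prod ℝ ℝ]
  have hcomp := (e1 ▸ e2 ▸ h2).comp swap23_restrict_measurePreserving
  exact hcomp

end MP


section Bad

theorem strip2 (f : ℝ → ℝ) (hf : Measurable f) (L : ℝ) :
    volume {x : ℝ × ℝ | x.1 ∈ Ico (0:ℝ) 1 ∧ x.2 ∈ Icc (f x.1 - L) (f x.1 + L)}
      ≤ ENNReal.ofReal (2*L) := by
  have hT : MeasurableSet {x : ℝ × ℝ | x.1 ∈ Ico (0:ℝ) 1 ∧ x.2 ∈ Icc (f x.1 - L) (f x.1 + L)} := by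
    apply MeasurableSet.inter
    · exact measurable_fst measurableSet_Ico
    · exact MeasurableSet.inter
        (measurableSet_le ((hf.comp measurable_fst).sub measurable_const) measurable_snd)
        (measurableSet_le measurable_snd ((hf.comp measurable_fst).add measurable_const))
  rw [Measure.volume_eq_prod ℝ ℝ, Measure.prod_apply hT]
  have hb : ∀ a : ℝ,
      volume (Prod.mk a ⁻¹' {x : ℝ × ℝ | x.1 ∈ Ico (0:ℝ) 1 ∧ x.2 ∈ Icc (f x.1 - L) (f x.1 + L)})
      ≤ (Ico (0:ℝ) 1).indicator (fun _ => ENNReal.ofReal (2*L)) a := by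
    intro a
    by_cases ha : a ∈ Ico (0:ℝ) 1
    · rw [indicator_of_mem ha]
      have : Prod.mk a ⁻¹' {x : ℝ × ℝ | x.1 ∈ Ico (0:ℝ) 1 ∧ x.2 ∈ Icc (f x.1 - L) (f x.1 + L)}
          ⊆ Icc (f a - L) (f a + L) := by
        intro b hb; exact hb.2
      refine (measure_mono this).trans ?_
      rw [Real.volume_Icc]
      apply ENNReal.ofReal_le_ofReal; ring_nf; rfl
    · rw [indicator_of_notMem ha]
      have : Prod.mk a ⁻¹' {x : ℝ × ℝ | x.1 ∈ Ico (0:ℝ) 1 ∧ x.2 ∈ Icc (f x.1 - L) (f x.1 + L)}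
          = ∅ := by
        ext b; simp only [mem_preimage, mem_setOf_eq, mem_empty_iff_false, iff_false]
        exact fun h => ha h.1
      rw [this]; simp
  refine (lintegral_mono hb).trans ?_
  rw [lintegral_indicator measurableSet_Ico, setLIntegral_const, Real.volume_Ico]
  simp

theorem strip3 (g : ℝ × ℝ → ℝ) (hg : Measurable g) (L : ℝ) :
    volume {q : (ℝ × ℝ) × ℝ | q.1 ∈ Ico (0:ℝ) 1 ×ˢ Ico (0:ℝ) 1
      ∧ q.2 ∈ Icc (g q.1 - L) (g q.1 + L)} ≤ ENNReal.ofReal (2*L) := by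
  have hT : MeasurableSet {q : (ℝ × ℝ) × ℝ | q.1 ∈ Ico (0:ℝ) 1 ×ˢ Ico (0:ℝ) 1
      ∧ q.2 ∈ Icc (g q.1 - L) (g q.1 + L)} := by
    apply MeasurableSet.inter
    · exact measurable_fst (measurableSet_Ico.prod measurableSet_Ico)
    · exact MeasurableSet.inter
        (measurableSet_le ((hg.comp measurable_fst).sub measurable_const) measurable_snd)
        (measurableSet_le measurable_snd ((hg.comp measurable_fst).add measurable_const))
  rw [Measure.volume_eq_prod (ℝ × ℝ) ℝ, Measure.prod_apply hT]
  have hb : ∀ a : ℝ × ℝ,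
      volume (Prod.mk a ⁻¹' {q : (ℝ × ℝ) × ℝ | q.1 ∈ Ico (0:ℝ) 1 ×ˢ Ico (0:ℝ) 1
        ∧ q.2 ∈ Icc (g q.1 - L) (g q.1 + L)})
      ≤ (Ico (0:ℝ) 1 ×ˢ Ico (0:ℝ) 1).indicator (fun _ => ENNReal.ofReal (2*L)) a := by
    intro a
    by_cases ha : a ∈ Ico (0:ℝ) 1 ×ˢ Ico (0:ℝ) 1
    · rw [indicator_of_mem ha]
      have : Prod.mk a ⁻¹' {q : (ℝ × ℝ) × ℝ | q.1 ∈ Ico (0:ℝ) 1 ×ˢ Ico (0:ℝ) 1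
          ∧ q.2 ∈ Icc (g q.1 - L) (g q.1 + L)} ⊆ Icc (g a - L) (g a + L) := fun b hb => hb.2
      refine (measure_mono this).trans ?_
      rw [Real.volume_Icc]
      apply ENNReal.ofReal_le_ofReal; ring_nf; rfl
    · rw [indicator_of_notMem ha]
      have : Prod.mk a ⁻¹' {q : (ℝ × ℝ) × ℝ | q.1 ∈ Ico (0:ℝ) 1 ×ˢ Ico (0:ℝ) 1
          ∧ q.2 ∈ Icc (g q.1 - L) (g q.1 + L)} = ∅ := by
        ext b; simp only [mem_preimage, mem_setOf_eq, mem_empty_iff_false, iff_false]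
        exact fun h => ha h.1
      rw [this]; simp
  refine (lintegral_mono hb).trans ?_
  rw [lintegral_indicator (measurableSet_Ico.prod measurableSet_Ico), setLIntegral_const]
  rw [Measure.volume_eq_prod ℝ ℝ, Measure.prod_prod, Real.volume_Ico]
  simp

theorem strip3' (g : ℝ × ℝ → ℝ) (hg : Measurable g) (L : ℝ) :
    volume ((fun p : (ℝ × ℝ) × ℝ => ((p.1.1, p.2), p.1.2)) ⁻¹'
      {q : (ℝ × ℝ) × ℝ | q.1 ∈ Ico (0:ℝ) 1 ×ˢ Ico (0:ℝ) 1
        ∧ q.2 ∈ Icc (g q.1 - L) (g q.1 + L)}) ≤ ENNReal.ofReal (2*L) := by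
  have hT : MeasurableSet {q : (ℝ × ℝ) × ℝ | q.1 ∈ Ico (0:ℝ) 1 ×ˢ Ico (0:ℝ) 1
      ∧ q.2 ∈ Icc (g q.1 - L) (g q.1 + L)} := by
    apply MeasurableSet.inter
    · exact measurable_fst (measurableSet_Ico.prod measurableSet_Ico)
    · exact MeasurableSet.inter
        (measurableSet_le ((hg.comp measurable_fst).sub measurable_const) measurable_snd)
        (measurableSet_le measurable_snd ((hg.comp measurable_fst).add measurable_const))
  have h1 : volume ((fun p : (ℝ × ℝ) × ℝ => ((p.1.1, p.2), p.1.2)) ⁻¹'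
      {q : (ℝ × ℝ) × ℝ | q.1 ∈ Ico (0:ℝ) 1 ×ˢ Ico (0:ℝ) 1
        ∧ q.2 ∈ Icc (g q.1 - L) (g q.1 + L)})
      = volume {q : (ℝ × ℝ) × ℝ | q.1 ∈ Ico (0:ℝ) 1 ×ˢ Ico (0:ℝ) 1
        ∧ q.2 ∈ Icc (g q.1 - L) (g q.1 + L)} := by
    rw [← Measure.map_apply swap23_measurePreserving.measurable hT,
      swap23_measurePreserving.map_eq]
  rw [h1]
  exact strip3 g hg L

theorem line_zero : volume {p : (ℝ × ℝ) × ℝ | p.1.1 = 0} = 0 := by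
  have : {p : (ℝ × ℝ) × ℝ | p.1.1 = 0} = (({(0:ℝ)} ×ˢ (univ : Set ℝ)) ×ˢ (univ : Set ℝ)) := by
    ext p
    simp only [mem_setOf_eq, Set.mem_prod, mem_singleton_iff, mem_univ, and_true]
  rw [this, Measure.volume_eq_prod (ℝ × ℝ) ℝ, Measure.prod_prod,
    Measure.volume_eq_prod ℝ ℝ, Measure.prod_prod]
  simp

theorem int_norm_le {α : Type*} [MeasurableSpace α] (μ : Measure α) (f : α → ℝ) (p : ℝ)
    (hp : 1 < p) (hf : AEStronglyMeasurable f μ) (hint : Integrable f μ)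
    (hfin : eLpNorm f (ENNReal.ofReal p) μ ≠ ⊤) (hμ : μ univ ≠ ⊤) :
    ∫ x, ‖f x‖ ∂μ ≤ ((eLpNorm f (ENNReal.ofReal p) μ) * (μ univ) ^ ((1 - 1/p : ℝ))).toReal := by
  have h0 : ∫ x, ‖f x‖ ∂μ = (eLpNorm f 1 μ).toReal := by
    rw [integral_norm_eq_lintegral_enorm hf, eLpNorm_one_eq_lintegral_enorm]
  rw [h0]
  apply ENNReal.toReal_mono
  · have hexp0 : (0:ℝ) ≤ 1 - 1/p := by
      have h1 : 1/p ≤ 1 := by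
        rw [div_le_one (by linarith)]; linarith
      linarith
    exact ENNReal.mul_ne_top hfin (ENNReal.rpow_ne_top_of_nonneg hexp0 hμ)
  · have hle := eLpNorm_le_eLpNorm_mul_rpow_measure_univ
      (p := (1:ℝ≥0∞)) (q := ENNReal.ofReal p) (μ := μ) (f := f)
      (by simpa using ENNReal.one_le_ofReal.2 hp.le) hf
    have hexp : 1 / (1:ℝ≥0∞).toReal - 1 / (ENNReal.ofReal p).toReal = 1 - 1/p := by
      rw [ENNReal.toReal_ofReal (by linarith)]; simp
    rwa [hexp] at hle

end Bad


set_option maxHeartbeats 2000000 in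
/-- Unfolding lemma: for `p > 1` and `C > 0` there is `C′ > 0`,
depending only on `p`, `C`, `η`, such that for all `ε = 1/k` and all `v` with
`‖v‖_{L^p(Ω)} ≤ C`,
`|∫_{Ω_ε⁺} v dx − ∫_{Ω_u⁺} T_ε(v χ_{Ω_ε⁺}) dx dy| ≤ C′ ε^{1−1/p}`. -/
theorem unfolding_lemma (η : ℝ → ℝ → ℝ) (hη : EtaHyp η) (p C : ℝ) (hp : 1 < p)
    (hC : 0 < C) :
    ∃ C' : ℝ, 0 < C' ∧ ∀ k : ℕ, 1 ≤ k → ∀ v : ℝ × ℝ → ℝ,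
      MemLp v (ENNReal.ofReal p) (volume.restrict (Omega η)) →
      eLpNorm v (ENNReal.ofReal p) (volume.restrict (Omega η)) ≤ ENNReal.ofReal C →
      |(∫ x in OmegaEpsPlus η (1 / (k : ℝ)), v x)
          - ∫ q in OmegaU η, unfold (1 / (k : ℝ)) (extz (OmegaEpsPlus η (1 / (k : ℝ))) v) q|
        ≤ C' * (1 / (k : ℝ)) ^ (1 - 1 / p) := by
  classical
  obtain ⟨K, hlip⟩ := hη.lip
  obtain ⟨c, hc0, hcle⟩ := hη.pos
  have hper := hη.per
  set L : ℝ := (K : ℝ) + 1 with hL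
  have hL1 : (1:ℝ) ≤ L := by rw [hL]; linarith [K.coe_nonneg]
  have hKL : (K : ℝ) ≤ L := by rw [hL]; linarith
  refine ⟨C * (6 * L), by positivity, ?_⟩
  intro k hk v hvmem hvnorm
  set ε : ℝ := 1 / (k : ℝ) with hεdef
  have hkR : (0:ℝ) < k := by exact_mod_cast hk
  have hε : 0 < ε := by positivity
  have hεk : (k:ℝ) * ε = 1 := by rw [hεdef]; field_simp
  have hε1 : ε ≤ 1 := by
    rw [hεdef, div_le_one hkR]; exact_mod_cast hk
  -- continuity and measurability facts
  have hηc : Continuous fun x : ℝ × ℝ => η x.1 x.2 := eta_cont hlip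
  have hmc : Continuous (etaMinus η) := etaMinus_cont hlip
  have hpc : Continuous (etaPlus η) := etaPlus_cont hlip
  have hosc : Continuous fun x : ℝ × ℝ => η x.1 (x.1 / ε) :=
    hηc.comp (continuous_fst.prodMk (continuous_fst.div_const ε))
  have hmΩε : MeasurableSet (OmegaEpsPlus η ε) := by
    have : OmegaEpsPlus η ε = {x : ℝ × ℝ | 0 < x.1} ∩ {x | x.1 < 1}
        ∩ {x | etaMinus η x.1 < x.2} ∩ {x | x.2 < η x.1 (x.1 / ε)} := by
      ext x; simp only [OmegaEpsPlus, mem_inter_iff, mem_setOf_eq]; tauto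
    rw [this]
    exact (((measurableSet_lt measurable_const measurable_fst).inter
      (measurableSet_lt measurable_fst measurable_const)).inter
      (measurableSet_lt (hmc.comp continuous_fst).measurable measurable_snd)).inter
      (measurableSet_lt measurable_snd hosc.measurable)
  have hmΩ : MeasurableSet (Omega η) := by
    have : Omega η = {x : ℝ × ℝ | 0 < x.1} ∩ {x | x.1 < 1}
        ∩ {x | 0 < x.2} ∩ {x | x.2 < etaPlus η x.1} := by
      ext x; simp only [Omega, mem_inter_iff, mem_setOf_eq]; tauto
    rw [this]
    exact (((measurableSet_lt measurable_const measurable_fst).inter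
      (measurableSet_lt measurable_fst measurable_const)).inter
      (measurableSet_lt measurable_const measurable_snd)).inter
      (measurableSet_lt measurable_snd (hpc.comp continuous_fst).measurable)
  have hmU : MeasurableSet (OmegaU η) := by
    have : OmegaU η = ({q : (ℝ × ℝ) × ℝ | 0 < q.1.1} ∩ {q | q.1.1 < 1}
        ∩ {q | etaMinus η q.1.1 < q.1.2} ∩ {q | q.1.2 < etaPlus η q.1.1})
        ∩ ({q | 0 ≤ q.2} ∩ {q | q.2 < 1} ∩ {q | q.1.2 < η q.1.1 q.2}) := by
      ext q
      simp only [OmegaU, OmegaPlus, Ycell, mem_inter_iff, mem_setOf_eq, mem_Ico]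
      tauto
    rw [this]
    have m11 : Measurable fun q : (ℝ × ℝ) × ℝ => q.1.1 := measurable_fst.fst
    have m12 : Measurable fun q : (ℝ × ℝ) × ℝ => q.1.2 := measurable_fst.snd
    have m2 : Measurable fun q : (ℝ × ℝ) × ℝ => q.2 := measurable_snd
    have mη : Measurable fun q : (ℝ × ℝ) × ℝ => η q.1.1 q.2 :=
      hηc.measurable.comp (m11.prodMk m2)
    exact ((((measurableSet_lt measurable_const m11).inter
        (measurableSet_lt m11 measurable_const)).inter
        (measurableSet_lt (hmc.measurable.comp m11) m12)).inter
        (measurableSet_lt m12 (hpc.measurable.comp m11))).inter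
      (((measurableSet_le measurable_const m2).inter
        (measurableSet_lt m2 measurable_const)).inter
        (measurableSet_lt m12 mη))
  -- set inclusions
  have hsub : OmegaEpsPlus η ε ⊆ Omega η := by
    rintro x ⟨h1, h2, h3, h4⟩
    refine ⟨h1, h2, ?_, ?_⟩
    · have := le_etaMinus hcle x.1
      linarith
    · exact h4.trans_le (le_etaPlus' hlip hper x.1 (x.1 / ε))
  -- notation
  set I : Set ℝ := Ico (0:ℝ) 1 with hI
  set R : Set (ℝ × ℝ) := I ×ˢ (univ : Set ℝ) with hR
  set D : Set ((ℝ × ℝ) × ℝ) := (I ×ˢ (univ : Set ℝ)) ×ˢ I with hD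
  have hmR : MeasurableSet R := measurableSet_Ico.prod MeasurableSet.univ
  have hmD : MeasurableSet D := (measurableSet_Ico.prod MeasurableSet.univ).prod measurableSet_Ico
  set Φ : (ℝ × ℝ) × ℝ → ℝ × ℝ :=
    fun q => (ε * (⌊q.1.1/ε⌋ : ℝ) + ε * q.2, q.1.2) with hΦdef
  have hΦmp : MeasurePreserving Φ (volume.restrict D) (volume.restrict R) :=
    Phi_measurePreserving hε hεk
  set w : ℝ × ℝ → ℝ := (OmegaEpsPlus η ε).indicator v with hw
  have hΩεR : OmegaEpsPlus η ε ⊆ R := by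
    rintro x ⟨h1, h2, _, _⟩
    exact ⟨⟨h1.le, h2⟩, trivial⟩
  have hUD : OmegaU η ⊆ D := by
    rintro q ⟨⟨h1, h2, _, _⟩, ⟨hy, _⟩⟩
    exact ⟨⟨⟨h1.le, h2⟩, trivial⟩, hy⟩
  -- a.e. measurability of w
  have hwm : AEStronglyMeasurable w volume := by
    obtain ⟨g, hgsm, hvg⟩ := hvmem.aestronglyMeasurable
    refine ⟨(OmegaEpsPlus η ε).indicator g, hgsm.indicator hmΩε, ?_⟩
    have h1 : ∀ᵐ x ∂volume, x ∈ Omega η → v x = g x := (ae_restrict_iff' hmΩ).mp hvg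
    filter_upwards [h1] with x hx
    by_cases hxε : x ∈ OmegaEpsPlus η ε
    · rw [hw]
      rw [indicator_of_mem hxε, indicator_of_mem hxε]
      exact hx (hsub hxε)
    · rw [hw, indicator_of_notMem hxε, indicator_of_notMem hxε]
  -- integrability
  have hfinΩ : volume (Omega η) ≠ ⊤ := by
    have hΩb : Omega η ⊆ Ioo (0:ℝ) 1 ×ˢ Ioo (0:ℝ) (η 0 0 + 2*(K:ℝ)) := by
      rintro x ⟨h1, h2, h3, h4⟩
      refine ⟨⟨h1, h2⟩, h3, ?_⟩
      exact h4.trans_le (etaPlus_bound hlip ⟨h1.le, h2.le⟩)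
    refine ne_top_of_le_ne_top ?_ (measure_mono hΩb)
    rw [Measure.volume_eq_prod ℝ ℝ, Measure.prod_prod]
    exact ENNReal.mul_ne_top (by simp [Real.volume_Ioo]) (by simp [Real.volume_Ioo])
  haveI : IsFiniteMeasure (volume.restrict (Omega η)) := by
    constructor
    rw [Measure.restrict_apply_univ]
    exact lt_top_iff_ne_top.2 hfinΩ
  have hp1 : (1 : ℝ≥0∞) ≤ ENNReal.ofReal p := by
    simpa using ENNReal.one_le_ofReal.2 hp.le
  have hv1 : MemLp v 1 (volume.restrict (Omega η)) := hvmem.mono_exponent hp1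
  have hvint : Integrable v (volume.restrict (Omega η)) := memLp_one_iff_integrable.mp hv1
  have hwint : Integrable w volume := by
    rw [hw, integrable_indicator_iff hmΩε]
    have hvOn : IntegrableOn v (Omega η) volume := hvint
    exact hvOn.mono_set hsub
  -- composed function
  have hwR : AEStronglyMeasurable w (volume.restrict R) := hwm.restrict
  have hwmap : AEStronglyMeasurable w (Measure.map Φ (volume.restrict D)) := by
    rw [hΦmp.map_eq]; exact hwR
  have hΦaem : AEMeasurable Φ (volume.restrict D) := hΦmp.measurable.aemeasurable
  have hcompasm : AEStronglyMeasurable (fun q => w (Φ q)) (volume.restrict D) :=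
    (hwmap.comp_aemeasurable hΦaem)
  have hcompint : Integrable (fun q => w (Φ q)) (volume.restrict D) := by
    have h := (integrable_map_measure hwmap hΦaem).mp
      (by rw [hΦmp.map_eq]; exact hwint.restrict)
    exact h
  -- identity 1
  have hsupp : Function.support w ⊆ R := by
    rw [hw]
    exact Set.support_indicator_subset.trans hΩεR
  have hid1 : (∫ x in OmegaEpsPlus η ε, v x) = ∫ q, w (Φ q) ∂(volume.restrict D) := by
    have e1 : ∫ x, w x ∂volume = ∫ x in OmegaEpsPlus η ε, v x := by
      rw [hw]; exact integral_indicator hmΩε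
    have e2 : ∫ x, w x ∂volume = ∫ x, w x ∂(volume.restrict R) := by
      conv_lhs => rw [← Set.indicator_eq_self.mpr hsupp]
      rw [integral_indicator hmR]
    have e3 : ∫ x, w x ∂(volume.restrict R) = ∫ q, w (Φ q) ∂(volume.restrict D) := by
      rw [← hΦmp.map_eq, integral_map hΦaem hwmap]
    rw [← e1, e2, e3]
  -- identity 2
  have hUD' : (volume.restrict D).restrict (OmegaU η) = volume.restrict (OmegaU η) := by
    rw [Measure.restrict_restrict hmU, inter_eq_self_of_subset_left hUD]
  have hid2 : (∫ q in OmegaU η, unfold ε (extz (OmegaEpsPlus η ε) v) q)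
      = ∫ q in OmegaU η, w (Φ q) ∂(volume.restrict D) := by
    rw [hUD']
    rfl
  -- the error set G
  set G : Set ((ℝ × ℝ) × ℝ) :=
    Φ ⁻¹' (OmegaEpsPlus η ε) ∩ ((OmegaU η)ᶜ ∩ D) with hGdef
  have hmpre : MeasurableSet (Φ ⁻¹' (OmegaEpsPlus η ε)) := hΦmp.measurable hmΩε
  have hdiff : (∫ x in OmegaEpsPlus η ε, v x)
      - (∫ q in OmegaU η, unfold ε (extz (OmegaEpsPlus η ε) v) q)
      = ∫ q, w (Φ q) ∂(volume.restrict G) := by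
    have hsplit := integral_add_compl hmU hcompint
    rw [hid1, hid2, ← hsplit]
    have e4 : ∫ q in (OmegaU η)ᶜ, w (Φ q) ∂(volume.restrict D)
        = ∫ q, w (Φ q) ∂(volume.restrict G) := by
      have hindic : (fun q => w (Φ q))
          = (Φ ⁻¹' (OmegaEpsPlus η ε)).indicator (fun q => w (Φ q)) := by
        funext q
        by_cases hq : Φ q ∈ OmegaEpsPlus η ε
        · exact (Set.indicator_of_mem (Set.mem_preimage.mpr hq) (fun q => w (Φ q))).symm
        · have hq' : q ∉ Φ ⁻¹' (OmegaEpsPlus η ε) := fun h => hq h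
          rw [indicator_of_notMem hq', hw, indicator_of_notMem hq]
      conv_lhs => rw [hindic]
      rw [integral_indicator hmpre, Measure.restrict_restrict hmU.compl,
        Measure.restrict_restrict hmpre, hGdef]
    rw [e4]
    ring
  -- bad set covering
  have hLε : (0:ℝ) ≤ L * ε := by positivity
  set S1 : Set (ℝ × ℝ) := {x | x.1 ∈ Ico (0:ℝ) 1
    ∧ x.2 ∈ Icc (etaMinus η x.1 - L*ε) (etaMinus η x.1 + L*ε)} with hS1
  set S2 : Set (ℝ × ℝ) := {x | x.1 ∈ Ico (0:ℝ) 1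
    ∧ x.2 ∈ Icc (etaPlus η x.1 - L*ε) (etaPlus η x.1 + L*ε)} with hS2
  set T3 : Set ((ℝ × ℝ) × ℝ) := {q | q.1 ∈ Ico (0:ℝ) 1 ×ˢ Ico (0:ℝ) 1
    ∧ q.2 ∈ Icc (η q.1.1 q.1.2 - L*ε) (η q.1.1 q.1.2 + L*ε)} with hT3
  set Z : Set ((ℝ × ℝ) × ℝ) := {q | q.1.1 = 0} with hZ
  set B3 : Set ((ℝ × ℝ) × ℝ) :=
    (fun q : (ℝ × ℝ) × ℝ => ((q.1.1, q.2), q.1.2)) ⁻¹' T3 with hB3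
  have hGbad : G ⊆ Z ∪ (S1 ×ˢ I ∪ (S2 ×ˢ I ∪ B3)) := by
    rintro q ⟨hqpre, hqU, hqD⟩
    obtain ⟨hx1I, -⟩ := (hqD : q.1 ∈ I ×ˢ (univ : Set ℝ) ∧ q.2 ∈ I).1
    have hyI : q.2 ∈ I := (hqD : q.1 ∈ I ×ˢ (univ : Set ℝ) ∧ q.2 ∈ I).2
    set x₁ : ℝ := q.1.1 with hx₁
    set x₂ : ℝ := q.1.2 with hx₂
    set y : ℝ := q.2 with hy
    set x' : ℝ := ε * (⌊x₁/ε⌋ : ℝ) + ε * y with hx'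
    obtain ⟨h'1, h'2, h'3, h'4⟩ :
        0 < x' ∧ x' < 1 ∧ etaMinus η x' < x₂ ∧ x₂ < η x' (x'/ε) := hqpre
    have hy0 : (0:ℝ) ≤ y := hyI.1
    have hy1 : y < 1 := hyI.2
    have hx'div : x'/ε = (⌊x₁/ε⌋ : ℝ) + y := by
      rw [hx']; field_simp
    have hηx' : η x' (x'/ε) = η x' y := by
      rw [hx'div]
      have h := eta_sub_int hper x' ((⌊x₁/ε⌋ : ℝ) + y) ⌊x₁/ε⌋
      simp only [add_sub_cancel_left] at h
      exact h.symm
    rw [hηx'] at h'4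
    have hfl1 : ε * (⌊x₁/ε⌋:ℝ) ≤ x₁ := by
      have h := Int.floor_le (x₁/ε)
      have h2 : ε * (x₁/ε) = x₁ := by field_simp
      nlinarith
    have hfl2 : x₁ < ε * (⌊x₁/ε⌋:ℝ) + ε := by
      have h := Int.lt_floor_add_one (x₁/ε)
      have h2 : ε * (x₁/ε) = x₁ := by field_simp
      nlinarith
    have hcl : |x₁ - x'| ≤ ε := by
      rw [abs_le, hx']
      constructor <;> nlinarith
    have hKε : (K:ℝ) * |x₁ - x'| ≤ L * ε := by
      calc (K:ℝ) * |x₁ - x'| ≤ L * |x₁ - x'| :=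
            mul_le_mul_of_nonneg_right hKL (abs_nonneg _)
        _ ≤ L * ε := mul_le_mul_of_nonneg_left hcl (by linarith)
    have hd1 : |etaMinus η x₁ - etaMinus η x'| ≤ L*ε := (etaMinus_lip hlip x₁ x').trans hKε
    have hd2 : |etaPlus η x₁ - etaPlus η x'| ≤ L*ε := (etaPlus_lip hlip x₁ x').trans hKε
    have hd3 : |η x₁ y - η x' y| ≤ L*ε := (eta_lip1 hlip x₁ x' y).trans hKε
    by_cases hx10 : x₁ = 0
    · exact Or.inl hx10
    have hx1pos : 0 < x₁ := lt_of_le_of_ne hx1I.1 (Ne.symm hx10)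
    by_cases hA : etaMinus η x₁ < x₂
    · by_cases hB : x₂ < etaPlus η x₁
      · by_cases hC : x₂ < η x₁ y
        · exact absurd ⟨⟨hx1pos, hx1I.2, hA, hB⟩, ⟨⟨hy0, hy1⟩, hC⟩⟩ hqU
        · -- B3 case
          right; right; right
          refine ⟨⟨hx1I, hy0, hy1⟩, ?_, ?_⟩
          · have := not_lt.mp hC
            linarith
          · have h5 := (abs_le.mp hd3).1
            linarith
      · -- S2 case
        right; right; left
        refine ⟨⟨hx1I, ?_, ?_⟩, hyI⟩
        · have := not_lt.mp hB
          linarith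
        · have h5 := (abs_le.mp hd2).1
          have h6 : η x' y ≤ etaPlus η x' := le_etaPlus' hlip hper x' y
          linarith
    · -- S1 case
      right; left
      refine ⟨⟨hx1I, ?_, ?_⟩, hyI⟩
      · have h5 := (abs_le.mp hd1).2
        linarith
      · have := not_lt.mp hA
        linarith
  -- measure bounds
  have hvolZ : volume Z = 0 := line_zero
  have hvolB1 : volume (S1 ×ˢ I) ≤ ENNReal.ofReal (2*(L*ε)) := by
    rw [Measure.volume_eq_prod (ℝ × ℝ) ℝ, Measure.prod_prod]
    have h2 : volume I = 1 := by rw [hI]; simp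
    rw [h2, mul_one]
    exact strip2 (etaMinus η) hmc.measurable (L*ε)
  have hvolB2 : volume (S2 ×ˢ I) ≤ ENNReal.ofReal (2*(L*ε)) := by
    rw [Measure.volume_eq_prod (ℝ × ℝ) ℝ, Measure.prod_prod]
    have h2 : volume I = 1 := by rw [hI]; simp
    rw [h2, mul_one]
    exact strip2 (etaPlus η) hpc.measurable (L*ε)
  have hvolB3 : volume B3 ≤ ENNReal.ofReal (2*(L*ε)) :=
    strip3' (fun z : ℝ × ℝ => η z.1 z.2) hηc.measurable (L*ε)
  have hvolG : volume G ≤ ENNReal.ofReal (6*(L*ε)) := by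
    refine (measure_mono hGbad).trans ?_
    refine (measure_union_le _ _).trans ?_
    rw [hvolZ, zero_add]
    refine (measure_union_le _ _).trans ?_
    refine (add_le_add hvolB1 ((measure_union_le _ _).trans
      (add_le_add hvolB2 hvolB3))).trans ?_
    rw [← ENNReal.ofReal_add (by positivity) (by positivity),
      ← ENNReal.ofReal_add (by positivity) (by positivity)]
    apply ENNReal.ofReal_le_ofReal
    linarith
  -- exponent facts
  have hr0 : (0:ℝ) ≤ 1 - 1/p := by
    have h1 : 1/p ≤ 1 := by rw [div_le_one (by linarith)]; linarith
    linarith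
  have hr1 : (1:ℝ) - 1/p ≤ 1 := by
    have h1 : (0:ℝ) < 1/p := by positivity
    linarith
  -- eLpNorm chain
  have hGsubD : G ⊆ D := fun q hq => hq.2.2
  have hmono : volume.restrict G ≤ volume.restrict D :=
    Measure.restrict_mono hGsubD le_rfl
  have hasmG : AEStronglyMeasurable (fun q => w (Φ q)) (volume.restrict G) :=
    hcompasm.mono_measure hmono
  have hintG : Integrable (fun q => w (Φ q)) (volume.restrict G) :=
    hcompint.mono_measure hmono
  have hsnorm : eLpNorm (fun q => w (Φ q)) (ENNReal.ofReal p) (volume.restrict G)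
      ≤ ENNReal.ofReal C := by
    have e5 : eLpNorm w (ENNReal.ofReal p) (volume.restrict R)
        = eLpNorm (fun q => w (Φ q)) (ENNReal.ofReal p) (volume.restrict D) := by
      have h := eLpNorm_map_measure (p := ENNReal.ofReal p) hwmap hΦaem
      rw [hΦmp.map_eq] at h
      exact h
    calc eLpNorm (fun q => w (Φ q)) (ENNReal.ofReal p) (volume.restrict G)
        ≤ eLpNorm (fun q => w (Φ q)) (ENNReal.ofReal p) (volume.restrict D) :=
          eLpNorm_mono_measure _ hmono
      _ = eLpNorm w (ENNReal.ofReal p) (volume.restrict R) := e5.symm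
      _ ≤ eLpNorm w (ENNReal.ofReal p) volume :=
          eLpNorm_mono_measure _ Measure.restrict_le_self
      _ = eLpNorm v (ENNReal.ofReal p) (volume.restrict (OmegaEpsPlus η ε)) := by
          rw [hw, eLpNorm_indicator_eq_eLpNorm_restrict hmΩε]
      _ ≤ eLpNorm v (ENNReal.ofReal p) (volume.restrict (Omega η)) :=
          eLpNorm_mono_measure _ (Measure.restrict_mono hsub le_rfl)
      _ ≤ ENNReal.ofReal C := hvnorm
  -- Hölder
  have hμuniv : (volume.restrict G) univ = volume G := by
    rw [Measure.restrict_apply_univ]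
  have hμfin : (volume.restrict G) univ ≠ ⊤ := by
    rw [hμuniv]; exact ne_top_of_le_ne_top ENNReal.ofReal_ne_top hvolG
  have hsfin : eLpNorm (fun q => w (Φ q)) (ENNReal.ofReal p) (volume.restrict G) ≠ ⊤ :=
    ne_top_of_le_ne_top ENNReal.ofReal_ne_top hsnorm
  have hholder := int_norm_le (volume.restrict G) (fun q => w (Φ q)) p hp hasmG hintG hsfin hμfin
  rw [hdiff]
  have habs : |∫ q, w (Φ q) ∂(volume.restrict G)|
      ≤ ∫ q, ‖w (Φ q)‖ ∂(volume.restrict G) := by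
    rw [← Real.norm_eq_abs]
    exact norm_integral_le_integral_norm _
  have hEbound : eLpNorm (fun q => w (Φ q)) (ENNReal.ofReal p) (volume.restrict G)
      * (volume.restrict G) univ ^ ((1 - 1/p : ℝ))
      ≤ ENNReal.ofReal C * ENNReal.ofReal ((6*(L*ε)) ^ ((1 - 1/p : ℝ))) := by
    apply mul_le_mul' hsnorm
    rw [hμuniv]
    calc volume G ^ ((1 - 1/p : ℝ))
        ≤ (ENNReal.ofReal (6*(L*ε))) ^ ((1 - 1/p : ℝ)) :=
          ENNReal.rpow_le_rpow hvolG hr0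
      _ = ENNReal.ofReal ((6*(L*ε)) ^ ((1 - 1/p : ℝ))) :=
          ENNReal.ofReal_rpow_of_pos (by positivity)
  have htoReal : (eLpNorm (fun q => w (Φ q)) (ENNReal.ofReal p) (volume.restrict G)
      * (volume.restrict G) univ ^ ((1 - 1/p : ℝ))).toReal
      ≤ C * ((6*(L*ε)) ^ ((1 - 1/p : ℝ))) := by
    have h := ENNReal.toReal_mono
      (ENNReal.mul_ne_top ENNReal.ofReal_ne_top ENNReal.ofReal_ne_top) hEbound
    rwa [← ENNReal.ofReal_mul hC.le, ENNReal.toReal_ofReal (by positivity)] at h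
  have hfinal : |∫ q, w (Φ q) ∂(volume.restrict G)|
      ≤ C * ((6*(L*ε)) ^ ((1 - 1/p : ℝ))) :=
    habs.trans (hholder.trans htoReal)
  refine hfinal.trans ?_
  have hsplitpow : (6*(L*ε)) ^ ((1 - 1/p : ℝ)) ≤ (6*L) * ε ^ ((1 - 1/p : ℝ)) := by
    rw [show (6*(L*ε)) = (6*L)*ε by ring, Real.mul_rpow (by positivity) hε.le]
    apply mul_le_mul_of_nonneg_right _ (Real.rpow_nonneg hε.le _)
    calc (6*L) ^ ((1 - 1/p : ℝ)) ≤ (6*L) ^ ((1:ℝ)) :=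
          Real.rpow_le_rpow_of_exponent_le (by linarith) hr1
      _ = 6*L := Real.rpow_one _
  calc C * ((6*(L*ε)) ^ ((1 - 1/p : ℝ)))
      ≤ C * ((6*L) * ε ^ ((1 - 1/p : ℝ))) := mul_le_mul_of_nonneg_left hsplitpow hC.le
    _ = C * (6*L) * ε ^ ((1 - 1/p : ℝ)) := by ring

end
end

section
/- Let u be continuously differentiable on an open neighborhood of the closure of Ω_ε⁺, extended by zero outside Ω_ε⁺. Then at every point (x,y) with x in the interior of Ω_ε⁺ ∩ {x₁/ε ∉ ℤ} and ε⌊x₁/ε⌋ + εy in the same ε-cell, the partial derivatives of T_ε u exist and satisfy ∂_{x₂}(T_ε u)(x,y) = T_ε(∂u/∂x₂)(x,y) and ∂_y(T_ε u)(x,y) = ε · T_ε(∂u/∂x₁)(x,y). -/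
open MeasureTheory Set Filter Topology

noncomputable section

/-- `etaMinus` is Lipschitz. -/
lemma etaMinus_lipschitz {η : ℝ → ℝ → ℝ} {K : NNReal}
    (hK : LipschitzWith K fun p : ℝ × ℝ => η p.1 p.2) :
    LipschitzWith K (etaMinus η) := by
  have hbdd : ∀ t : ℝ, BddBelow (η t '' Icc 0 1) := by
    intro t
    have hc : ContinuousOn (η t) (Icc 0 1) := by
      have : Continuous fun y : ℝ => η t y :=
        hK.continuous.comp (continuous_const.prodMk continuous_id)
      exact this.continuousOn
    exact (isCompact_Icc.image_of_continuousOn hc).bddBelow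
  have hne : ∀ t : ℝ, (η t '' Icc 0 1).Nonempty := fun t =>
    (Set.nonempty_Icc.2 zero_le_one).image _
  have key : ∀ t s : ℝ, etaMinus η t ≤ etaMinus η s + K * |t - s| := by
    intro t s
    have : ∀ b ∈ η s '' Icc 0 1, etaMinus η t - K * |t - s| ≤ b := by
      rintro b ⟨z, hz, rfl⟩
      have h1 : etaMinus η t ≤ η t z := csInf_le (hbdd t) (mem_image_of_mem _ hz)
      have h2 : |η t z - η s z| ≤ K * |t - s| := by
        have := hK.dist_le_mul (t, z) (s, z)
        simp only [Prod.dist_eq, Real.dist_eq, sub_self, abs_zero] at this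
        simpa [max_eq_left (abs_nonneg (t - s))] using this
      have := (abs_le.1 h2).2
      linarith
    have h3 : etaMinus η t - ↑K * |t - s| ≤ etaMinus η s := le_csInf (hne s) this
    linarith
  refine LipschitzWith.of_dist_le_mul fun t s => ?_
  rw [Real.dist_eq, Real.dist_eq, abs_sub_le_iff]
  have h1 := key t s
  have h2 := key s t
  rw [abs_sub_comm s t] at h2
  exact ⟨by linarith, by linarith⟩

/-- `OmegaEpsPlus` is open (for `ε ≠ 0`). -/
lemma omegaEpsPlus_isOpen {η : ℝ → ℝ → ℝ} (hη : EtaHyp η) {ε : ℝ} (hε : ε ≠ 0) :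
    IsOpen (OmegaEpsPlus η ε) := by
  obtain ⟨K, hK⟩ := hη.lip
  have hηc : Continuous fun p : ℝ × ℝ => η p.1 p.2 := hK.continuous
  have hem : Continuous (etaMinus η) := (etaMinus_lipschitz hK).continuous
  have hosc : Continuous fun x : ℝ × ℝ => η x.1 (x.1 / ε) :=
    hηc.comp (continuous_fst.prodMk (continuous_fst.div_const ε))
  have : OmegaEpsPlus η ε = {x : ℝ × ℝ | 0 < x.1} ∩ ({x : ℝ × ℝ | x.1 < 1} ∩
      ({x : ℝ × ℝ | etaMinus η x.1 < x.2} ∩ {x : ℝ × ℝ | x.2 < η x.1 (x.1 / ε)})) := by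
    ext z; simp [OmegaEpsPlus]
  rw [this]
  exact (isOpen_lt continuous_const continuous_fst).inter
    ((isOpen_lt continuous_fst continuous_const).inter
      ((isOpen_lt (hem.comp continuous_fst) continuous_snd).inter
        (isOpen_lt continuous_snd hosc)))

/-- exchange of derivatives and unfolding. For `u` of class `C¹` on a
neighborhood of the closure of `Ω_ε⁺`, extended by zero, at points `(x,y)` with `x`
in the (open) set `Ω_ε⁺` with `x₁/ε ∉ ℤ` and with `ε⌊x₁/ε⌋ + εy` in the same
`ε`-cell (and the unfolded point in `Ω_ε⁺`), the partial derivatives of `T_ε u`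
exist and satisfy `∂_{x₂}(T_ε u) = T_ε(∂u/∂x₂)` and `∂_y(T_ε u) = ε T_ε(∂u/∂x₁)`. -/
theorem unfold_derivatives (η : ℝ → ℝ → ℝ) (hη : EtaHyp η) (k : ℕ) (hk : 1 ≤ k)
    (ε : ℝ) (hε : ε = 1 / (k : ℝ)) (u : ℝ × ℝ → ℝ) (U : Set (ℝ × ℝ)) (hU : IsOpen U)
    (hcl : closure (OmegaEpsPlus η ε) ⊆ U) (hu : ContDiffOn ℝ 1 u U)
    (x : ℝ × ℝ) (y : ℝ)
    (hx : x ∈ OmegaEpsPlus η ε)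
    (hxZ : ∀ n : ℤ, x.1 / ε ≠ (n : ℝ))
    (hy : y ∈ Ico (0 : ℝ) 1)
    (hX : ((ε * (⌊x.1 / ε⌋ : ℝ) + ε * y, x.2) : ℝ × ℝ) ∈ OmegaEpsPlus η ε)
    (hcell : ⌊(ε * (⌊x.1 / ε⌋ : ℝ) + ε * y) / ε⌋ = ⌊x.1 / ε⌋) :
    HasDerivAt (fun t : ℝ => unfold ε (extz (OmegaEpsPlus η ε) u) ((x.1, t), y))
      (unfold ε (extz (OmegaEpsPlus η ε) fun z => fderiv ℝ u z (0, 1)) (x, y)) x.2 ∧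
    HasDerivAt (fun s : ℝ => unfold ε (extz (OmegaEpsPlus η ε) u) (x, s))
      (ε * unfold ε (extz (OmegaEpsPlus η ε) fun z => fderiv ℝ u z (1, 0)) (x, y)) y := by
  classical
  have hεpos : 0 < ε := by
    rw [hε]; positivity
  set S := OmegaEpsPlus η ε with hS
  have hSopen : IsOpen S := omegaEpsPlus_isOpen hη (ne_of_gt hεpos)
  set X : ℝ × ℝ := (ε * (⌊x.1 / ε⌋ : ℝ) + ε * y, x.2) with hXdef
  have hXS : X ∈ S := hX
  have hXU : X ∈ U := hcl (subset_closure hXS)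
  have hdiff : HasFDerivAt u (fderiv ℝ u X) X := by
    have : DifferentiableAt ℝ u X :=
      ((hu.differentiableOn one_ne_zero) X hXU).differentiableAt (hU.mem_nhds hXU)
    exact this.hasFDerivAt
  constructor
  · -- derivative in x₂
    have hline : HasDerivAt (fun t : ℝ => ((ε * (⌊x.1 / ε⌋ : ℝ) + ε * y, t) : ℝ × ℝ))
        ((0, 1) : ℝ × ℝ) x.2 := (hasDerivAt_const _ _).prodMk (hasDerivAt_id _)
    have h1 : HasDerivAt (fun t : ℝ => u (ε * (⌊x.1 / ε⌋ : ℝ) + ε * y, t))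
        (fderiv ℝ u X (0, 1)) x.2 := hdiff.comp_hasDerivAt x.2 hline
    have heq : (fun t : ℝ => extz S u (ε * (⌊x.1 / ε⌋ : ℝ) + ε * y, t)) =ᶠ[𝓝 x.2]
        fun t : ℝ => u (ε * (⌊x.1 / ε⌋ : ℝ) + ε * y, t) := by
      have hmem : ∀ᶠ t in 𝓝 x.2, ((ε * (⌊x.1 / ε⌋ : ℝ) + ε * y, t) : ℝ × ℝ) ∈ S := by
        have hc : Continuous fun t : ℝ => ((ε * (⌊x.1 / ε⌋ : ℝ) + ε * y, t) : ℝ × ℝ) :=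
          continuous_const.prodMk continuous_id
        exact hc.continuousAt.preimage_mem_nhds (hSopen.mem_nhds hXS)
      filter_upwards [hmem] with t ht
      simp [extz, Set.indicator_of_mem ht]
    have h1' := h1.congr_of_eventuallyEq heq
    have hval : unfold ε (extz S fun z => fderiv ℝ u z (0, 1)) (x, y)
        = fderiv ℝ u X (0, 1) := by
      show extz S (fun z => fderiv ℝ u z (0, 1)) X = _
      simp [extz, Set.indicator_of_mem hXS]
    rw [show (fun t : ℝ => unfold ε (extz S u) ((x.1, t), y))
        = fun t : ℝ => extz S u (ε * (⌊x.1 / ε⌋ : ℝ) + ε * y, t) from rfl, hval]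
    exact h1'
  · -- derivative in y
    have hline : HasDerivAt (fun s : ℝ =>
        ((ε * (⌊x.1 / ε⌋ : ℝ) + ε * s, x.2) : ℝ × ℝ)) ((ε, 0) : ℝ × ℝ) y := by
      have h0 : HasDerivAt (fun s : ℝ => ε * (⌊x.1 / ε⌋ : ℝ) + ε * s) ε y := by
        simpa using ((hasDerivAt_id y).const_mul ε).const_add (ε * (⌊x.1 / ε⌋ : ℝ))
      exact h0.prodMk (hasDerivAt_const _ _)
    have h2 : HasDerivAt (fun s : ℝ => u (ε * (⌊x.1 / ε⌋ : ℝ) + ε * s, x.2))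
        (fderiv ℝ u X (ε, 0)) y := hdiff.comp_hasDerivAt y hline
    have heq : (fun s : ℝ => extz S u (ε * (⌊x.1 / ε⌋ : ℝ) + ε * s, x.2)) =ᶠ[𝓝 y]
        fun s : ℝ => u (ε * (⌊x.1 / ε⌋ : ℝ) + ε * s, x.2) := by
      have hmem : ∀ᶠ s in 𝓝 y, ((ε * (⌊x.1 / ε⌋ : ℝ) + ε * s, x.2) : ℝ × ℝ) ∈ S := by
        have hc : Continuous fun s : ℝ => ((ε * (⌊x.1 / ε⌋ : ℝ) + ε * s, x.2) : ℝ × ℝ) :=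
          (continuous_const.add (continuous_const.mul continuous_id)).prodMk continuous_const
        have hXy : ((ε * (⌊x.1 / ε⌋ : ℝ) + ε * y, x.2) : ℝ × ℝ) ∈ S := hXS
        exact hc.continuousAt.preimage_mem_nhds (hSopen.mem_nhds hXy)
      filter_upwards [hmem] with s hs
      simp [extz, Set.indicator_of_mem hs]
    have h2' := h2.congr_of_eventuallyEq heq
    have hsmul : fderiv ℝ u X ((ε, 0) : ℝ × ℝ) = ε * fderiv ℝ u X (1, 0) := by
      have : ((ε, 0) : ℝ × ℝ) = ε • ((1, 0) : ℝ × ℝ) := by simp [Prod.smul_def]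
      rw [this, (fderiv ℝ u X).map_smul, smul_eq_mul]
    have hval : unfold ε (extz S fun z => fderiv ℝ u z (1, 0)) (x, y)
        = fderiv ℝ u X (1, 0) := by
      show extz S (fun z => fderiv ℝ u z (1, 0)) X = _
      simp [extz, Set.indicator_of_mem hXS]
    rw [show (fun s : ℝ => unfold ε (extz S u) (x, s))
        = fun s : ℝ => extz S u (ε * (⌊x.1 / ε⌋ : ℝ) + ε * s, x.2) from rfl, hval]
    rw [hsmul] at h2'
    exact h2'


end
end
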